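/- arXiv:math/0104252 — 8 statements merged into one kernel-verified Lean document; each statement's English description precedes it below -/
import Mathlib

section
/- Let X be a countable set, λ = {λ_n} a regular sequence of probability measures on X (λ_n({x}) → 0 for each x), and f: X → ℝ with N ≤ f(x) ≤ M for all x. If there exists a set A ⊆ X with lim_n λ_n(A) = 1 and lim_{x→∞, x∈A} f(x) = M (meaning: for every ε > 0 all but finitely many x ∈ A satisfy f(x) > M − ε, and A is infinite), then lim_n Σ_x f(x)λ_n(x) = M. -/
open Filter Topology Set

/-- If a set `A` has measure `1` on the average and `f → M` at infinity
along `A`, then the averages of `f` tend to `M` (with `λ` regular and `N ≤ f ≤ M`). -/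
theorem average_eq_sup_of_limit_along_set {X : Type*} [Countable X] [Infinite X]
    (lam : ℕ → X → ℝ)
    (_hpos : ∀ n x, 0 ≤ lam n x) (_hprob : ∀ n, HasSum (lam n) 1)
    (_hreg : ∀ x, Tendsto (fun n => lam n x) atTop (nhds 0))
    (f : X → ℝ) (N M : ℝ) (_hf : ∀ x, N ≤ f x ∧ f x ≤ M)
    (A : Set X) (_hAinf : A.Infinite)
    (_hA1 : Tendsto (fun n => ∑' x : A, lam n (x : X)) atTop (nhds 1))
    (_hAlim : ∀ ε > (0 : ℝ), {x ∈ A | f x ≤ M - ε}.Finite) :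
    Tendsto (fun n => ∑' x, f x * lam n x) atTop (nhds M) := by
  classical
  obtain ⟨x0⟩ : Nonempty X := inferInstance
  have hC : (0:ℝ) ≤ M - N := by
    have h := _hf x0; linarith [h.1, h.2]
  obtain ⟨C, hCdef⟩ : ∃ C, C = M - N := ⟨M - N, rfl⟩
  rw [← hCdef] at hC
  have hsum : ∀ n, Summable (lam n) := fun n => (_hprob n).summable
  have htot : ∀ n, ∑' x, lam n x = 1 := fun n => (_hprob n).tsum_eq
  obtain ⟨g, hgdef⟩ : ∃ g : X → ℝ, g = fun x => M - f x := ⟨_, rfl⟩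
  have hg0 : ∀ x, 0 ≤ g x := fun x => by have := (_hf x).2; simp [hgdef]; linarith
  have hgB : ∀ x, g x ≤ C := fun x => by have := (_hf x).1; simp [hgdef, hCdef]; linarith
  have hgs : ∀ n, Summable (fun x => g x * lam n x) := fun n =>
    Summable.of_nonneg_of_le (fun x => mul_nonneg (hg0 x) (_hpos n x))
      (fun x => mul_le_mul_of_nonneg_right (hgB x) (_hpos n x)) ((hsum n).mul_left C)
  have key : ∀ n, ∑' x, f x * lam n x = M - ∑' x, g x * lam n x := by
    intro n
    have h1 : (fun x => f x * lam n x) = fun x => M * lam n x - g x * lam n x := by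
      funext x; simp [hgdef]; ring
    rw [h1, Summable.tsum_sub ((hsum n).mul_left M) (hgs n), tsum_mul_left, htot n, mul_one]
  simp only [key]
  have hG : Tendsto (fun n => ∑' x, g x * lam n x) atTop (nhds 0) := by
    have hGnn : ∀ n, 0 ≤ ∑' x, g x * lam n x := fun n =>
      tsum_nonneg (fun x => mul_nonneg (hg0 x) (_hpos n x))
    rw [Metric.tendsto_atTop]
    intro a ha
    -- finite bad set
    have hSfin : {x ∈ A | f x ≤ M - a/4}.Finite := _hAlim (a/4) (by linarith)
    set F := hSfin.toFinset with hFdef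
    -- bound functions
    set h : ℕ → X → ℝ := fun n x =>
      (if x ∈ F then C * lam n x else 0) + (a/4) * lam n x +
        (Aᶜ).indicator (fun y => C * lam n y) x with hhdef
    have hs1 : ∀ n, Summable (fun x => if x ∈ F then C * lam n x else 0) := by
      intro n
      refine Summable.of_nonneg_of_le (fun x => ?_) (fun x => ?_) ((hsum n).mul_left C)
      · by_cases hx : x ∈ F <;> simp [hx, mul_nonneg hC (_hpos n x)]
      · by_cases hx : x ∈ F <;> simp [hx, mul_nonneg hC (_hpos n x)]
    have hs3 : ∀ n, Summable ((Aᶜ).indicator (fun y => C * lam n y)) := fun n =>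
      ((hsum n).mul_left C).indicator _
    have hsh : ∀ n, Summable (h n) := fun n =>
      ((hs1 n).add ((hsum n).mul_left (a/4))).add (hs3 n)
    have hle : ∀ n, ∑' x, g x * lam n x ≤ ∑' x, h n x := by
      intro n
      refine Summable.tsum_le_tsum (fun x => ?_) (hgs n) (hsh n)
      by_cases hxF : x ∈ F
      · have t1 : g x * lam n x ≤ C * lam n x :=
          mul_le_mul_of_nonneg_right (hgB x) (_hpos n x)
        have t2 : 0 ≤ (a/4) * lam n x := mul_nonneg (by linarith) (_hpos n x)
        have t3 : 0 ≤ (Aᶜ).indicator (fun y => C * lam n y) x :=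
          Set.indicator_nonneg (fun y _ => mul_nonneg hC (_hpos n y)) x
        simp only [hhdef, if_pos hxF]; linarith
      · by_cases hxA : x ∈ A
        · have hfx : ¬ f x ≤ M - a/4 := by
            intro hcon
            exact hxF (hSfin.mem_toFinset.2 ⟨hxA, hcon⟩)
          have t1 : g x * lam n x ≤ (a/4) * lam n x := by
            apply mul_le_mul_of_nonneg_right _ (_hpos n x)
            simp [hgdef]; push_neg at hfx; linarith
          have t3 : 0 ≤ (Aᶜ).indicator (fun y => C * lam n y) x :=
            Set.indicator_nonneg (fun y _ => mul_nonneg hC (_hpos n y)) x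
          simp only [hhdef, if_neg hxF]; linarith
        · have t1 : g x * lam n x ≤ C * lam n x :=
            mul_le_mul_of_nonneg_right (hgB x) (_hpos n x)
          have t2 : 0 ≤ (a/4) * lam n x := mul_nonneg (by linarith) (_hpos n x)
          have t3 : (Aᶜ).indicator (fun y => C * lam n y) x = C * lam n x := by
            rw [Set.indicator_of_mem (by simpa using hxA)]
          simp only [hhdef, if_neg hxF, t3]; linarith
    -- value of tsum h
    have hval : ∀ n, ∑' x, h n x =
        C * (∑ x ∈ F, lam n x) + (a/4) + C * (1 - ∑' x : A, lam n (x:X)) := by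
      intro n
      have e1 : ∑' x, (if x ∈ F then C * lam n x else 0) = C * ∑ x ∈ F, lam n x := by
        rw [tsum_eq_sum (s := F) (fun x hx => if_neg hx)]
        simp [Finset.mul_sum]
      have e2 : ∑' x, (a/4) * lam n x = (a/4) := by
        rw [tsum_mul_left, htot n, mul_one]
      have e3 : ∑' x, (Aᶜ).indicator (fun y => C * lam n y) x
          = C * (1 - ∑' x : A, lam n (x:X)) := by
        have hA : ∑' x : A, lam n (x:X) = ∑' x, A.indicator (lam n) x :=
          (tsum_subtype A (lam n))
        have hsplit : ∑' x, A.indicator (lam n) x + ∑' x, (Aᶜ).indicator (lam n) x = 1 := by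
          rw [← Summable.tsum_add ((hsum n).indicator A) ((hsum n).indicator Aᶜ)]
          have : (fun x => A.indicator (lam n) x + (Aᶜ).indicator (lam n) x) = lam n := by
            funext x; by_cases hx : x ∈ A <;> simp [hx]
          rw [this, htot n]
        have : ∑' x, (Aᶜ).indicator (fun y => C * lam n y) x
            = C * ∑' x, (Aᶜ).indicator (lam n) x := by
          rw [← tsum_mul_left]
          congr 1; funext x; by_cases hx : x ∈ Aᶜ <;> simp [hx]
        rw [this, hA]; congr 1; linarith [hsplit]
      rw [hhdef]
      simp only []
      rw [Summable.tsum_add ((hs1 n).add ((hsum n).mul_left (a/4))) (hs3 n),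
        Summable.tsum_add (hs1 n) ((hsum n).mul_left (a/4)), e1, e2, e3]
    have hB : Tendsto (fun n => C * (∑ x ∈ F, lam n x) + (a/4)
        + C * (1 - ∑' x : A, lam n (x:X))) atTop (nhds (a/4)) := by
      have h1 : Tendsto (fun n => ∑ x ∈ F, lam n x) atTop (nhds 0) := by
        have := tendsto_finset_sum F (fun x _ => _hreg x)
        simpa using this
      have h2 : Tendsto (fun n => (1:ℝ) - ∑' x : A, lam n (x:X)) atTop (nhds 0) := by
        have := _hA1.const_sub 1
        simpa using this
      have := ((h1.const_mul C).add_const (a/4)).add (h2.const_mul C)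
      simpa using this
    have hev : ∀ᶠ n in atTop, (C * (∑ x ∈ F, lam n x) + (a/4)
        + C * (1 - ∑' x : A, lam n (x:X))) < a :=
      hB.eventually_lt_const (by linarith)
    rw [eventually_atTop] at hev
    obtain ⟨n0, hn0⟩ := hev
    refine ⟨n0, fun n hn => ?_⟩
    rw [Real.dist_eq, sub_zero, abs_of_nonneg (hGnn n)]
    calc ∑' x, g x * lam n x ≤ ∑' x, h n x := hle n
      _ = _ := hval n
      _ < a := hn0 n hn
  have := hG.const_sub M
  rw [sub_zero] at this
  exact this
end

section
/- Let X be a countable set, λ = {λ_n} a regular sequence of probability measures on X, and f: X → ℝ bounded with N ≤ f(x) ≤ M. If lim_n Σ_x f(x)λ_n(x) = M, then there exists an infinite set A ⊆ X with lim_n λ_n(A) = 1 such that f(x) → M as x → ∞ along A (i.e., for every ε > 0 only finitely many x ∈ A have f(x) ≤ M − ε). -/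
open Filter Topology Set

section Aux

variable {X : Type*}

private lemma mu_mono {p : X → ℝ} (hp : ∀ x, 0 ≤ p x) (hs : Summable p) {s t : Set X}
    (hst : s ⊆ t) : ∑' x : s, p x ≤ ∑' x : t, p x :=
  Summable.tsum_le_tsum_of_inj (Set.inclusion hst) (Set.inclusion_injective hst)
    (fun c _ => hp c) (fun _ => le_rfl) (hs.subtype _) (hs.subtype _)

private lemma mu_compl {p : X → ℝ} (hs : Summable p) (s : Set X) :
    (∑' x : s, p x) + ∑' x : (sᶜ : Set X), p x = ∑' x, p x :=
  Summable.tsum_add_tsum_compl (hs.subtype _) (hs.subtype _)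

private lemma mu_union_le {p : X → ℝ} (hp : ∀ x, 0 ≤ p x) (hs : Summable p) (s t : Set X) :
    ∑' x : ↑(s ∪ t), p x ≤ (∑' x : s, p x) + ∑' x : t, p x := by
  have h1 : s ∪ t = s ∪ (t \ s) := (Set.union_diff_self).symm
  rw [h1, Summable.tsum_union_disjoint Set.disjoint_sdiff_right (hs.subtype _) (hs.subtype _)]
  exact add_le_add_right (mu_mono hp hs Set.diff_subset) _

end Aux

/-- Conversely, for regular `λ`, if the averages of `f` (with `N ≤ f ≤ M`)
tend to `M`, then there is an infinite set `A` of average measure `1` along which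
`f → M` at infinity. -/
theorem exists_set_of_average_eq_sup {X : Type*} [Countable X] [Infinite X]
    (lam : ℕ → X → ℝ)
    (_hpos : ∀ n x, 0 ≤ lam n x) (_hprob : ∀ n, HasSum (lam n) 1)
    (_hreg : ∀ x, Tendsto (fun n => lam n x) atTop (nhds 0))
    (f : X → ℝ) (N M : ℝ) (_hf : ∀ x, N ≤ f x ∧ f x ≤ M)
    (_havg : Tendsto (fun n => ∑' x, f x * lam n x) atTop (nhds M)) :
    ∃ A : Set X, A.Infinite ∧
      Tendsto (fun n => ∑' x : A, lam n (x : X)) atTop (nhds 1) ∧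
      ∀ ε > (0 : ℝ), {x ∈ A | f x ≤ M - ε}.Finite := by
  classical
  have hsum : ∀ n, Summable (lam n) := fun n => (_hprob n).summable
  have htot : ∀ n, ∑' x, lam n x = 1 := fun n => (_hprob n).tsum_eq
  set μ : ℕ → Set X → ℝ := fun n s => ∑' x : s, lam n x with hμdef
  have hμnonneg : ∀ n (s : Set X), 0 ≤ μ n s := fun n s => tsum_nonneg fun x => _hpos n x
  have hμmono : ∀ n {s t : Set X}, s ⊆ t → μ n s ≤ μ n t :=
    fun n _ _ h => mu_mono (_hpos n) (hsum n) h
  have hμcompl : ∀ n (s : Set X), μ n sᶜ = 1 - μ n s := by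
    intro n s
    have := mu_compl (hsum n) s
    rw [htot n] at this
    simp only [hμdef]
    linarith
  have hμle_one : ∀ n (s : Set X), μ n s ≤ 1 := by
    intro n s
    have h1 := hμcompl n s
    have h2 := hμnonneg n sᶜ
    linarith
  -- the sets B k
  set B : ℕ → Set X := fun k => {x | M - 1 / ((k : ℝ) + 1) < f x} with hBdef
  -- summability facts
  have hC : ∀ n, Summable (fun x => (M - f x) * lam n x) := by
    intro n
    refine Summable.of_nonneg_of_le
      (fun x => mul_nonneg (by linarith [(_hf x).2]) (_hpos n x))
      (fun x => mul_le_mul_of_nonneg_right (by linarith [(_hf x).1]) (_hpos n x))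
      ((hsum n).mul_left (M - N))
  have hfl : ∀ n, Summable (fun x => f x * lam n x) := by
    intro n
    have he : (fun x => f x * lam n x) = fun x => M * lam n x - (M - f x) * lam n x := by
      ext x; ring
    rw [he]
    exact ((hsum n).mul_left M).sub (hC n)
  have hCsum : ∀ n, ∑' x, (M - f x) * lam n x = M - ∑' x, f x * lam n x := by
    intro n
    have he : ∀ x, (M - f x) * lam n x = M * lam n x - f x * lam n x := fun x => by ring
    rw [tsum_congr he, Summable.tsum_sub ((hsum n).mul_left M) (hfl n), tsum_mul_left, htot n, mul_one]
  set r : ℕ → ℝ := fun n => M - ∑' x, f x * lam n x with hrdef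
  have hr0 : Tendsto r atTop (nhds 0) := by
    have := _havg.const_sub M
    simpa using this
  -- key inequality
  have hkey : ∀ k n, μ n (B k)ᶜ ≤ ((k : ℝ) + 1) * r n := by
    intro k n
    have hkpos : (0 : ℝ) < 1 / ((k : ℝ) + 1) := by positivity
    have h1 : (1 / ((k : ℝ) + 1)) * μ n (B k)ᶜ ≤ ∑' x : ↑(B k)ᶜ, (M - f x) * lam n x := by
      rw [hμdef, ← tsum_mul_left]
      refine Summable.tsum_le_tsum ?_ (((hsum n).subtype _).mul_left _) ((hC n).subtype _)
      rintro ⟨x, hx⟩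
      have hx' : f x ≤ M - 1 / ((k : ℝ) + 1) := by
        simp only [hBdef, Set.mem_compl_iff, Set.mem_setOf_eq, not_lt] at hx
        exact hx
      exact mul_le_mul_of_nonneg_right (by linarith) (_hpos n x)
    have h2 : ∑' x : ↑(B k)ᶜ, (M - f x) * lam n x ≤ r n := by
      refine le_trans (Summable.tsum_subtype_le _ _
        (fun x => mul_nonneg (by linarith [(_hf x).2]) (_hpos n x)) (hC n)) ?_
      exact le_of_eq (hCsum n)
    have h3 := h1.trans h2
    have hkne : ((k : ℝ) + 1) ≠ 0 := by positivity
    calc μ n (B k)ᶜ = ((k : ℝ) + 1) * ((1 / ((k : ℝ) + 1)) * μ n (B k)ᶜ) := by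
          field_simp
      _ ≤ ((k : ℝ) + 1) * r n := mul_le_mul_of_nonneg_left h3 (by positivity)
  -- μ n (B k) → 1
  have hμB : ∀ k, Tendsto (fun n => μ n (B k)) atTop (nhds 1) := by
    intro k
    have hcompl : Tendsto (fun n => μ n (B k)ᶜ) atTop (nhds 0) := by
      refine squeeze_zero (fun n => hμnonneg n _) (fun n => hkey k n) ?_
      simpa using hr0.const_mul ((k : ℝ) + 1)
    have he : (fun n => μ n (B k)) = fun n => 1 - μ n (B k)ᶜ := by
      ext n
      have := hμcompl n (B k)
      linarith
    rw [he]
    simpa using hcompl.const_sub 1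
  -- thresholds
  have hth : ∀ k : ℕ, ∃ a, ∀ n ≥ a, 1 - 1 / ((k : ℝ) + 1) < μ n (B k) := by
    intro k
    have hlt : (1 : ℝ) - 1 / ((k : ℝ) + 1) < 1 := by
      have : (0 : ℝ) < 1 / ((k : ℝ) + 1) := by positivity
      linarith
    exact eventually_atTop.mp ((hμB k).eventually (eventually_gt_nhds hlt))
  choose a ha using hth
  set Nk : ℕ → ℕ := fun k => k + (Finset.range (k + 1)).sup a with hNkdef
  have hNmono : StrictMono Nk := by
    intro i j hij
    have hsup : (Finset.range (i + 1)).sup a ≤ (Finset.range (j + 1)).sup a :=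
      Finset.sup_mono (Finset.range_subset_range.mpr (by omega))
    simp only [hNkdef]
    omega
  have hNk : ∀ k n, Nk k ≤ n → 1 - 1 / ((k : ℝ) + 1) < μ n (B k) := by
    intro k n hn
    refine ha k n ?_
    have : a k ≤ (Finset.range (k + 1)).sup a := Finset.le_sup (Finset.self_mem_range_succ k)
    simp only [hNkdef] at hn
    omega
  -- tightness
  have htight : ∀ (n : ℕ) (δ : ℝ), 0 < δ → ∃ F : Finset X, 1 - δ < ∑ x ∈ F, lam n x := by
    intro n δ hδ
    exact ((_hprob n).eventually (eventually_gt_nhds (by linarith))).exists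
  choose F hF using fun n (k : ℕ) => htight n (1 / ((k : ℝ) + 1)) (by positivity)
  set G : ℕ → Finset X := fun k => (Finset.range (Nk (k + 1))).biUnion (fun n => F n k)
    with hGdef
  have hG : ∀ k n, n < Nk (k + 1) → 1 - 1 / ((k : ℝ) + 1) < μ n ↑(G k) := by
    intro k n hn
    refine lt_of_lt_of_le (hF n k) ?_
    show _ ≤ ∑' (x : ↑(↑(G k) : Set X)), lam n ↑x
    rw [Finset.tsum_subtype' (G k) (lam n)]
    refine Finset.sum_le_sum_of_subset_of_nonneg ?_ (fun x _ _ => _hpos n x)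
    intro x hx
    exact Finset.mem_biUnion.mpr ⟨n, Finset.mem_range.mpr hn, hx⟩
  -- the set A
  set A : Set X := ⋃ k, (B k ∩ ↑(G k)) with hAdef
  -- lower bound
  have hlow : ∀ k n, Nk k ≤ n → n < Nk (k + 1) → 1 - 2 / ((k : ℝ) + 1) < μ n A := by
    intro k n h1 h2
    have hsub : B k ∩ ↑(G k) ⊆ A := Set.subset_iUnion (fun k => B k ∩ ↑(G k)) k
    have hBk := hNk k n h1
    have hGk := hG k n h2
    have hcu : μ n (B k ∩ ↑(G k))ᶜ ≤ μ n (B k)ᶜ + μ n (↑(G k) : Set X)ᶜ := by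
      rw [Set.compl_inter]
      exact mu_union_le (_hpos n) (hsum n) _ _
    have e1 := hμcompl n (B k)
    have e2 := hμcompl n (↑(G k) : Set X)
    have e3 := hμcompl n (B k ∩ ↑(G k))
    have e4 := hμmono n hsub
    have h4 : 2 / ((k : ℝ) + 1) = 1 / ((k : ℝ) + 1) + 1 / ((k : ℝ) + 1) := by ring
    linarith
  -- Tendsto 1
  have hT : Tendsto (fun n => μ n A) atTop (nhds 1) := by
    rw [Metric.tendsto_atTop]
    intro ε hε
    obtain ⟨k, hk⟩ : ∃ k : ℕ, 2 / ((k : ℝ) + 1) < ε := by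
      obtain ⟨k, hk⟩ := exists_nat_gt (2 / ε)
      refine ⟨k, ?_⟩
      rw [div_lt_iff₀ (by positivity)]
      rw [div_lt_iff₀ hε] at hk
      nlinarith
    refine ⟨Nk k, fun n hn => ?_⟩
    -- find the largest j with Nk j ≤ n
    set j := Nat.findGreatest (fun j => Nk j ≤ n) n with hjdef
    have hkn : k ≤ n := le_trans (hNmono.le_apply) hn
    have hkj : k ≤ j := Nat.le_findGreatest (P := fun j => Nk j ≤ n) hkn hn
    have hj1 : Nk j ≤ n := Nat.findGreatest_spec (P := fun j => Nk j ≤ n) hkn hn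
    have hj2 : n < Nk (j + 1) := by
      by_contra hcon
      push_neg at hcon
      have hj1n : j + 1 ≤ n := le_trans (hNmono.le_apply) hcon
      exact Nat.findGreatest_is_greatest (P := fun j => Nk j ≤ n) (Nat.lt_succ_self j) hj1n hcon
    have hmain := hlow j n hj1 hj2
    have hjk : 2 / ((j : ℝ) + 1) ≤ 2 / ((k : ℝ) + 1) := by
      apply div_le_div_of_nonneg_left (by norm_num) (by positivity)
      have : (k : ℝ) ≤ (j : ℝ) := Nat.cast_le.mpr hkj
      linarith
    have hle := hμle_one n A
    rw [Real.dist_eq, abs_of_nonpos (by linarith)]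
    linarith
  -- condition 3
  have h3 : ∀ ε > (0 : ℝ), {x ∈ A | f x ≤ M - ε}.Finite := by
    intro ε hε
    obtain ⟨k₀, hk₀⟩ : ∃ k₀ : ℕ, 1 / ((k₀ : ℝ) + 1) < ε := by
      obtain ⟨k₀, hk₀⟩ := exists_nat_gt (1 / ε)
      refine ⟨k₀, ?_⟩
      rw [div_lt_iff₀ (by positivity)]
      rw [div_lt_iff₀ hε] at hk₀
      nlinarith
    refine Set.Finite.subset ((Finset.range k₀).biUnion G).finite_toSet ?_
    rintro x ⟨hxA, hxf⟩
    rw [hAdef, Set.mem_iUnion] at hxA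
    obtain ⟨k, hxB, hxG⟩ := hxA
    have hxB' : M - 1 / ((k : ℝ) + 1) < f x := hxB
    have hklt : k < k₀ := by
      by_contra hcon
      push_neg at hcon
      have : 1 / ((k : ℝ) + 1) ≤ 1 / ((k₀ : ℝ) + 1) := by
        apply div_le_div_of_nonneg_left (by norm_num) (by positivity)
        have : (k₀ : ℝ) ≤ (k : ℝ) := Nat.cast_le.mpr hcon
        linarith
      linarith
    simp only [Finset.coe_biUnion, Finset.coe_sort_coe, Set.mem_iUnion, Finset.mem_coe,
      Finset.mem_range]
    exact ⟨k, hklt, hxG⟩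
  -- infinitude
  have hInf : A.Infinite := by
    by_contra hni
    rw [Set.not_infinite] at hni
    have hfin : A.Finite := hni
    have h0 : Tendsto (fun n => μ n A) atTop (nhds 0) := by
      have he : ∀ n, μ n A = ∑ x ∈ hfin.toFinset, lam n x := by
        intro n
        show (∑' (x : ↑A), lam n ↑x) = _
        rw [← Finset.tsum_subtype' hfin.toFinset (lam n), hfin.coe_toFinset]
      rw [funext he]
      have := tendsto_finset_sum hfin.toFinset (fun x _ => _hreg x)
      simpa using this
    have := tendsto_nhds_unique hT h0
    norm_num at this
  exact ⟨A, hInf, hT, h3⟩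
end

section
/- Let X be a countably infinite set and F = {B_n} an increasing sequence of finite subsets of X with union X. Then the class of L_F-measurable subsets of X is not closed under intersection: there exist subsets A and B of X such that lim_n |A ∩ B_n|/|B_n| and lim_n |B ∩ B_n|/|B_n| both exist (both equal to 1/2), while lim_n |A ∩ B ∩ B_n|/|B_n| does not exist. -/
open Filter Topology Set

-- count of a parity class in Ico, with sharp invariant
lemma parity_cnt_Ico (p : ℕ) (hp : p < 2) (a b : ℕ) :
    b - a ≤ 2 * ((Finset.Ico a b).filter (fun j => j % 2 = p)).card + 1 ∧
    2 * ((Finset.Ico a b).filter (fun j => j % 2 = p)).card ≤ (b - a) + 1 := by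
  suffices h : ∀ b, (b % 2 = p → (2 * ((Finset.Ico a b).filter (fun j => j % 2 = p)).card ≤ b - a ∧ b - a ≤ 2 * ((Finset.Ico a b).filter (fun j => j % 2 = p)).card + 1)) ∧
      (b % 2 ≠ p → (2 * ((Finset.Ico a b).filter (fun j => j % 2 = p)).card ≤ (b - a) + 1 ∧ b - a ≤ 2 * ((Finset.Ico a b).filter (fun j => j % 2 = p)).card)) by
    rcases h b with ⟨h1, h2⟩
    by_cases hb : b % 2 = p
    · exact ⟨(h1 hb).2, le_trans (h1 hb).1 (Nat.le_succ _)⟩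
    · exact ⟨le_trans (h2 hb).2 (Nat.le_succ _), (h2 hb).1⟩
  intro b
  induction b with
  | zero => simp
  | succ b ih =>
    by_cases hab : a ≤ b
    · rw [Nat.Ico_succ_right_eq_insert_Ico hab, Finset.filter_insert]
      by_cases hb : b % 2 = p
      · rw [if_pos hb]
        rw [Finset.card_insert_of_notMem (by simp)]
        rcases ih with ⟨ih1, _⟩
        have := ih1 hb
        constructor <;> intro h <;> omega
      · rw [if_neg hb]
        rcases ih with ⟨_, ih2⟩
        have := ih2 hb
        constructor <;> intro h <;> omega
    · have : Finset.Ico a (b+1) = ∅ := by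
        apply Finset.Ico_eq_empty; omega
      rw [this]
      simp
      omega

section blocks
variable (M : ℕ → ℕ) (hM1 : 1 ≤ M 0) (hM10 : ∀ k, 10 * M k < M (k + 1))

include hM10 in
lemma M_strictMono : StrictMono M := by
  apply strictMono_nat_of_lt_succ
  intro n
  have := hM10 n
  omega

include hM1 hM10 in
lemma M_pow_le : ∀ k, 10 ^ k ≤ M k := by
  intro k
  induction k with
  | zero => simpa using hM1
  | succ k ih =>
    have := hM10 k
    calc 10 ^ (k+1) = 10 * 10 ^ k := by ring
    _ ≤ 10 * M k := by omega
    _ ≤ M (k+1) := by omega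

include hM1 hM10 in
lemma M_exists_gt : ∀ j, ∃ t, j < M t := by
  intro j
  refine ⟨j, lt_of_lt_of_le ?_ (M_pow_le M hM1 hM10 j)⟩
  exact Nat.lt_pow_self (by norm_num : 1 < 10)

end blocks

noncomputable def Kf (M : ℕ → ℕ) (hM : ∀ j, ∃ t, j < M t) (j : ℕ) : ℕ := Nat.find (hM j)

lemma Kf_spec (M : ℕ → ℕ) (hM : ∀ j, ∃ t, j < M t) (j : ℕ) : j < M (Kf M hM j) :=
  Nat.find_spec (hM j)

lemma Kf_iff (M : ℕ → ℕ) (hSM : StrictMono M) (hM : ∀ j, ∃ t, j < M t) (k j : ℕ) :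
    M k ≤ j ↔ k < Kf M hM j := by
  constructor
  · intro h
    by_contra hc
    push_neg at hc
    exact absurd (le_trans (hSM.monotone hc) h) (by simpa using Kf_spec M hM j)
  · intro h
    have := Nat.find_min (hM j) h
    omega

lemma cnt_split (P : ℕ → Prop) [DecidablePred P] (a m : ℕ) (h : a ≤ m) :
    ((Finset.range m).filter P).card
      = ((Finset.range a).filter P).card + ((Finset.Ico a m).filter P).card := by
  rw [Finset.range_eq_Ico,
    ← Finset.Ico_union_Ico_eq_Ico (Nat.zero_le a) h, Finset.filter_union,
    Finset.card_union_of_disjoint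
      (Finset.disjoint_filter_filter (Finset.Ico_disjoint_Ico_consecutive 0 a m)), Finset.range_eq_Ico]

lemma cntP_bound (M : ℕ → ℕ) (hM1 : 1 ≤ M 0) (hM10 : ∀ k, 10 * M k < M (k + 1))
    (hM : ∀ j, ∃ t, j < M t) :
    ∀ t, ∀ m ≤ M t,
      2 * ((Finset.range m).filter (fun j => j % 2 = Kf M hM j % 2)).card ≤ m + 2 * t + 2 ∧
      m ≤ 2 * ((Finset.range m).filter (fun j => j % 2 = Kf M hM j % 2)).card + 2 * t + 2 := by
  have hSM : StrictMono M := M_strictMono M hM10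
  intro t
  induction t with
  | zero =>
    intro m hm
    have hcongr : (Finset.range m).filter (fun j => j % 2 = Kf M hM j % 2)
        = (Finset.range m).filter (fun j => j % 2 = 0) := by
      apply Finset.filter_congr
      intro j hj
      simp only [Finset.mem_range] at hj
      have hK : Kf M hM j = 0 := by
        by_contra hc
        have : M 0 ≤ j := (Kf_iff M hSM hM 0 j).2 (by omega)
        omega
      simp [hK]
    rw [hcongr, Finset.range_eq_Ico]
    have := parity_cnt_Ico 0 (by norm_num) 0 m
    omega
  | succ t ih =>
    intro m hm
    by_cases hmt : m ≤ M t
    · have := ih m hmt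
      omega
    · push_neg at hmt
      have hsplit := cnt_split (fun j => j % 2 = Kf M hM j % 2) (M t) m hmt.le
      have hcongr : (Finset.Ico (M t) m).filter (fun j => j % 2 = Kf M hM j % 2)
          = (Finset.Ico (M t) m).filter (fun j => j % 2 = (t + 1) % 2) := by
        apply Finset.filter_congr
        intro j hj
        simp only [Finset.mem_Ico] at hj
        have h1 : t < Kf M hM j := (Kf_iff M hSM hM t j).1 hj.1
        have h2 : ¬ (t + 1 < Kf M hM j) := by
          intro hc
          have : M (t+1) ≤ j := (Kf_iff M hSM hM (t+1) j).2 hc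
          omega
        have : Kf M hM j = t + 1 := by omega
        simp [this]
      have hIco := parity_cnt_Ico ((t+1) % 2) (by omega) (M t) m
      have hbase := ih (M t) le_rfl
      rw [hsplit, hcongr]
      omega

lemma sq_le_ten_pow : ∀ t : ℕ, (t + 1) * (t + 1) ≤ 10 ^ t := by
  intro t
  induction t with
  | zero => norm_num
  | succ t ih =>
    have : 10 ^ (t+1) = 10 * 10 ^ t := by ring
    nlinarith

lemma Kf_sq_le (M : ℕ → ℕ) (hM1 : 1 ≤ M 0) (hM10 : ∀ k, 10 * M k < M (k + 1))
    (hM : ∀ j, ∃ t, j < M t) (j : ℕ) : Kf M hM j * Kf M hM j ≤ j := by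
  set K := Kf M hM j with hKdef
  rcases Nat.eq_zero_or_pos K with h0 | hpos
  · simp [h0]
  · have hle : M (K - 1) ≤ j := by
      have := (Kf_iff M (M_strictMono M hM10) hM (K - 1) j).2 (by omega)
      exact this
    have hpow := M_pow_le M hM1 hM10 (K - 1)
    have hsq := sq_le_ten_pow (K - 1)
    have : (K - 1) + 1 = K := by omega
    rw [this] at hsq
    omega

lemma tendsto_div_nat (C : ℝ) (u : ℕ → ℕ) (hu : Tendsto u atTop atTop) :
    Tendsto (fun n => C / (u n : ℝ)) atTop (𝓝 0) :=
  (tendsto_const_div_atTop_nhds_zero_nat C).comp hu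

lemma ncard_setOf_inter_Iio (P : ℕ → Prop) [DecidablePred P] (m : ℕ) :
    ({j | P j} ∩ Set.Iio m).ncard = ((Finset.range m).filter P).card := by
  rw [← Set.ncard_coe_finset]
  congr 1
  ext j
  simp [and_comm]

lemma nat_sqrt_tendsto : Tendsto Nat.sqrt atTop atTop := by
  apply tendsto_atTop_atTop_of_monotone
  · intro a b h
    exact Nat.sqrt_le_sqrt h
  · intro b
    exact ⟨b * b, by rw [Nat.sqrt_eq]⟩

lemma exists_transfer {X : Type*} [Countable X] (B : ℕ → Set X)
    (hfin : ∀ n, (B n).Finite) (hmono : Monotone B) (hcov : ⋃ n, B n = Set.univ) :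
    ∃ pos : X → ℕ, ∀ (n : ℕ) (S : Set ℕ),
      ((pos ⁻¹' S) ∩ B n).ncard = (S ∩ Set.Iio ((B n).ncard)).ncard := by
  classical
  obtain ⟨emb, hemb⟩ := exists_injective_nat X
  have hex : ∀ x : X, ∃ n, x ∈ B n := by
    intro x
    have : x ∈ ⋃ n, B n := by rw [hcov]; trivial
    exact Set.mem_iUnion.1 this
  set r : X → ℕ := fun x => Nat.find (hex x) with hr
  have hr_mem : ∀ x, x ∈ B (r x) := fun x => Nat.find_spec (hex x)
  have hmemB : ∀ x n, x ∈ B n ↔ r x ≤ n := by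
    intro x n
    constructor
    · intro h; exact Nat.find_min' (hex x) h
    · intro h; exact hmono h (hr_mem x)
  set klt : X → X → Prop := fun y x => r y < r x ∨ (r y = r x ∧ emb y < emb x) with hklt
  have hirr : ∀ x, ¬ klt x x := by intro x; simp [hklt]
  have hbelow_fin : ∀ x, {y | klt y x}.Finite := by
    intro x
    apply (hfin (r x)).subset
    intro y hy
    rcases hy with h | h
    · exact (hmemB y (r x)).2 h.le
    · exact (hmemB y (r x)).2 h.1.le
  set pos : X → ℕ := fun x => {y | klt y x}.ncard with hpos
  have hpos_lt : ∀ x y, klt x y → pos x < pos y := by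
    intro x y hxy
    have hsub : insert x {z | klt z x} ⊆ {z | klt z y} := by
      intro z hz
      rcases hz with rfl | hz
      · exact hxy
      · rcases hz with h | h
        · rcases hxy with h' | h'
          · exact Or.inl (h.trans h')
          · exact Or.inl (h'.1 ▸ h)
        · rcases hxy with h' | h'
          · exact Or.inl (h.1 ▸ h')
          · exact Or.inr ⟨h.1.trans h'.1, h.2.trans h'.2⟩
    calc pos x < pos x + 1 := Nat.lt_succ_self _
    _ = (insert x {z | klt z x}).ncard := by
        have hnot : x ∉ {z | klt z x} := hirr x
        rw [Set.ncard_insert_of_notMem hnot (hbelow_fin x)]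
    _ ≤ pos y := Set.ncard_le_ncard hsub (hbelow_fin y)
  have hpos_inj : Function.Injective pos := by
    intro x y h
    by_contra hne
    have htri : klt x y ∨ klt y x := by
      rcases lt_trichotomy (r x) (r y) with h1 | h1 | h1
      · exact Or.inl (Or.inl h1)
      · rcases lt_trichotomy (emb x) (emb y) with h2 | h2 | h2
        · exact Or.inl (Or.inr ⟨h1, h2⟩)
        · exact absurd (hemb h2) hne
        · exact Or.inr (Or.inr ⟨h1.symm, h2⟩)
      · exact Or.inr (Or.inl h1)
    rcases htri with ht | ht
    · exact absurd h (hpos_lt x y ht).ne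
    · exact absurd h.symm (hpos_lt y x ht).ne
  have hmem_iff : ∀ x n, x ∈ B n ↔ pos x < (B n).ncard := by
    intro x n
    constructor
    · intro hx
      have hsub : {y | klt y x} ⊆ B n \ {x} := by
        intro y hy
        refine ⟨(hmemB y n).2 ?_, ?_⟩
        · have : r y ≤ r x := by rcases hy with h | h; exacts [h.le, h.1.le]
          exact this.trans ((hmemB x n).1 hx)
        · intro hyx
          rw [Set.mem_singleton_iff] at hyx
          exact hirr x (hyx ▸ hy)
      calc pos x ≤ (B n \ {x}).ncard := Set.ncard_le_ncard hsub ((hfin n).diff)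
      _ < (B n).ncard := Set.ncard_diff_singleton_lt_of_mem hx (hfin n)
    · intro hx
      by_contra hc
      have hsub : B n ⊆ {y | klt y x} := by
        intro y hy
        have h1 : r y ≤ n := (hmemB y n).1 hy
        have h2 : n < r x := by
          by_contra h
          exact hc ((hmemB x n).2 (by omega))
        exact Or.inl (by omega)
      have h3 := Set.ncard_le_ncard hsub (hbelow_fin x)
      simp only [hpos] at hx
      omega
  have himgB : ∀ n, pos '' B n = Set.Iio ((B n).ncard) := by
    intro n
    have hIio : (Set.Iio ((B n).ncard)) = ↑(Finset.range ((B n).ncard)) := by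
      ext j; simp
    apply Set.eq_of_subset_of_ncard_le
    · rintro j ⟨x, hx, rfl⟩
      exact (hmem_iff x n).1 hx
    · rw [Set.ncard_image_of_injective _ hpos_inj, hIio, Set.ncard_coe_finset,
        Finset.card_range]
    · rw [hIio]; exact (Finset.range _).finite_toSet
  refine ⟨pos, fun n S => ?_⟩
  have himg : pos '' ((pos ⁻¹' S) ∩ B n) = S ∩ Set.Iio ((B n).ncard) := by
    rw [Set.image_inter hpos_inj, Set.image_preimage_eq_inter_range, himgB n]
    ext j
    simp only [Set.mem_inter_iff, Set.mem_range, Set.mem_Iio]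
    constructor
    · rintro ⟨⟨hS, _⟩, hj⟩; exact ⟨hS, hj⟩
    · rintro ⟨hS, hj⟩
      have : j ∈ pos '' B n := by rw [himgB n]; exact hj
      rcases this with ⟨x, _, rfl⟩
      exact ⟨⟨hS, ⟨x, rfl⟩⟩, hj⟩
  rw [← himg, Set.ncard_image_of_injective _ hpos_inj]

lemma half_limit (c a e : ℕ → ℕ) (hc : ∀ n, 1 ≤ c n)
    (h1 : ∀ n, 2 * a n ≤ c n + e n) (h2 : ∀ n, c n ≤ 2 * a n + e n)
    (he : Tendsto (fun n => (e n : ℝ) / (c n : ℝ)) atTop (𝓝 0)) :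
    Tendsto (fun n => (a n : ℝ) / (c n : ℝ)) atTop (𝓝 (1 / 2)) := by
  have h0 : Tendsto (fun n => (a n : ℝ) / (c n : ℝ) - 1 / 2) atTop (𝓝 0) := by
    refine squeeze_zero_norm (a := fun n => (e n : ℝ) / (c n : ℝ)) (fun n => ?_) he
    have hcpos : (0 : ℝ) < c n := by exact_mod_cast hc n
    have heq : (a n : ℝ) / (c n : ℝ) - 1 / 2 = ((2 * a n : ℝ) - c n) / (2 * c n) := by
      field_simp
    rw [Real.norm_eq_abs, heq, abs_div, abs_of_pos (by positivity : (0:ℝ) < 2 * c n)]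
    have habs : |(2 * a n : ℝ) - c n| ≤ e n := by
      rw [abs_le]
      have c1 := h1 n
      have c2 := h2 n
      constructor
      · have : (c n : ℝ) ≤ 2 * a n + e n := by exact_mod_cast c2
        linarith
      · have : (2 * a n : ℝ) ≤ c n + e n := by exact_mod_cast c1
        linarith
    calc |(2 * a n : ℝ) - c n| / (2 * c n) ≤ (e n : ℝ) / (2 * c n) := by
          gcongr
    _ ≤ (e n : ℝ) / c n := by
          gcongr
          linarith
  have := h0.add_const (1 / 2)
  simpa using this

/-- For any increasing covering family `{B n}` of finite nonempty subsets
of a countably infinite set, the `L_F`-measurable sets are not closed under intersection: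
there exist sets `A`, `A'` both of measure `1/2` whose intersection is not measurable. -/
theorem measurable_sets_not_closed_under_inter {X : Type*} [Countable X] [Infinite X]
    (B : ℕ → Set X) (hfin : ∀ n, (B n).Finite) (hne : ∀ n, (B n).Nonempty)
    (hmono : Monotone B) (hcov : ⋃ n, B n = Set.univ) :
    ∃ A A' : Set X,
      Tendsto (fun n => ((A ∩ B n).ncard : ℝ) / ((B n).ncard : ℝ)) atTop (nhds (1 / 2)) ∧
      Tendsto (fun n => ((A' ∩ B n).ncard : ℝ) / ((B n).ncard : ℝ)) atTop (nhds (1 / 2)) ∧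
      ¬ ∃ L : ℝ,
        Tendsto (fun n => ((A ∩ A' ∩ B n).ncard : ℝ) / ((B n).ncard : ℝ)) atTop (nhds L) := by
  obtain ⟨pos, htrans⟩ := exists_transfer B hfin hmono hcov
  set c : ℕ → ℕ := fun n => (B n).ncard with hc
  have hc_pos : ∀ n, 1 ≤ c n := fun n => (Set.ncard_pos (hfin n)).2 (hne n)
  have hc_mono : Monotone c := fun a b h => Set.ncard_le_ncard (hmono h) (hfin b)
  have hmemU : ∀ x : X, ∃ n, x ∈ B n := by
    intro x
    have : x ∈ ⋃ n, B n := by rw [hcov]; trivial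
    exact Set.mem_iUnion.1 this
  choose g hg using hmemU
  have hunb : ∀ N, ∃ n, N < c n := by
    intro N
    obtain ⟨t, hts, htf, htc⟩ :=
      Set.Infinite.exists_subset_ncard_eq (Set.infinite_univ (α := X)) (N + 1)
    refine ⟨htf.toFinset.sup g, ?_⟩
    have hsub : t ⊆ B (htf.toFinset.sup g) := by
      intro x hx
      exact hmono (Finset.le_sup (htf.mem_toFinset.2 hx)) (hg x)
    have h2 := Set.ncard_le_ncard hsub (hfin _)
    show N < (B (htf.toFinset.sup g)).ncard
    omega
  have hc_top : Tendsto c atTop atTop :=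
    tendsto_atTop_atTop_of_monotone hc_mono (fun b => (hunb b).imp fun n h => h.le)
  -- construct the rapidly growing subsequence
  have hstep : ∀ p : ℕ, ∃ n, p < n ∧ 10 * c p < c n := by
    intro p
    obtain ⟨n, hn⟩ := hunb (10 * c p)
    refine ⟨max n (p + 1), by omega, lt_of_lt_of_le hn (hc_mono (le_max_left _ _))⟩
  choose f hf1 hf2 using hstep
  set nseq : ℕ → ℕ := fun k => Nat.rec 0 (fun _ prev => f prev) k with hnseq
  have hnseq_succ : ∀ k, nseq (k + 1) = f (nseq k) := fun k => rfl
  have hnseq_mono : StrictMono nseq :=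
    strictMono_nat_of_lt_succ (fun k => by rw [hnseq_succ]; exact hf1 _)
  set M : ℕ → ℕ := fun k => c (nseq k) with hM
  have hM1 : 1 ≤ M 0 := hc_pos _
  have hM10 : ∀ k, 10 * M k < M (k + 1) := by
    intro k
    have := hf2 (nseq k)
    simpa [hM, hnseq_succ] using this
  have hMSM : StrictMono M := M_strictMono M hM10
  have hMex : ∀ j, ∃ t, j < M t := M_exists_gt M hM1 hM10
  have hMpos : ∀ k, 1 ≤ M k := fun k =>
    le_trans (Nat.one_le_pow _ _ (by norm_num)) (M_pow_le M hM1 hM10 k)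
  set K : ℕ → ℕ := Kf M hMex with hK
  -- the two sets
  refine ⟨pos ⁻¹' {j | j % 2 = 0}, pos ⁻¹' {j | j % 2 = K j % 2}, ?_, ?_, ?_⟩
  · -- A has density 1/2
    have hcnt : ∀ n, ((pos ⁻¹' {j | j % 2 = 0} ∩ B n).ncard)
        = ((Finset.range (c n)).filter (fun j => j % 2 = 0)).card := by
      intro n
      rw [htrans n, ncard_setOf_inter_Iio]
    simp only [hcnt]
    apply half_limit c _ (fun _ => 1) hc_pos
    · intro n
      have := (parity_cnt_Ico 0 (by norm_num) 0 (c n))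
      rw [← Finset.range_eq_Ico] at this
      omega
    · intro n
      have := (parity_cnt_Ico 0 (by norm_num) 0 (c n))
      rw [← Finset.range_eq_Ico] at this
      omega
    · exact tendsto_div_nat 1 c hc_top |>.congr (fun n => by norm_num)
  · -- A' has density 1/2
    have hcnt : ∀ n, ((pos ⁻¹' {j | j % 2 = K j % 2} ∩ B n).ncard)
        = ((Finset.range (c n)).filter (fun j => j % 2 = K j % 2)).card := by
      intro n
      rw [htrans n, ncard_setOf_inter_Iio]
    simp only [hcnt]
    apply half_limit c _ (fun n => 2 * K (c n) + 2) hc_pos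
    · intro n
      exact (cntP_bound M hM1 hM10 hMex (K (c n)) (c n) (Kf_spec M hMex (c n)).le).1
    · intro n
      exact (cntP_bound M hM1 hM10 hMex (K (c n)) (c n) (Kf_spec M hMex (c n)).le).2
    · -- error term tends to zero
      refine squeeze_zero_norm
        (a := fun n => (8 : ℝ) / ((Nat.sqrt (c n) + 1 : ℕ) : ℝ)) (fun n => ?_) ?_
      · have hcpos : (0 : ℝ) < c n := by exact_mod_cast hc_pos n
        have hspos : (0 : ℝ) < ((Nat.sqrt (c n) + 1 : ℕ) : ℝ) := by positivity
        rw [Real.norm_eq_abs, abs_of_nonneg (by positivity)]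
        rw [div_le_div_iff₀ hcpos hspos]
        have hKle : K (c n) ≤ Nat.sqrt (c n) :=
          Nat.le_sqrt.2 (Kf_sq_le M hM1 hM10 hMex (c n))
        have hsle : Nat.sqrt (c n) ≤ c n := Nat.sqrt_le_self _
        have hssq : Nat.sqrt (c n) * Nat.sqrt (c n) ≤ c n := Nat.sqrt_le (c n)
        have hkey : (2 * K (c n) + 2) * (Nat.sqrt (c n) + 1) ≤ 8 * c n := by
          nlinarith [hc_pos n]
        calc ((2 * K (c n) + 2 : ℕ) : ℝ) * ((Nat.sqrt (c n) + 1 : ℕ) : ℝ)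
            = (((2 * K (c n) + 2) * (Nat.sqrt (c n) + 1) : ℕ) : ℝ) := by push_cast; ring
        _ ≤ ((8 * c n : ℕ) : ℝ) := by exact_mod_cast hkey
        _ = 8 * (c n : ℝ) := by push_cast; ring
      · apply tendsto_div_nat
        apply tendsto_atTop_mono (fun n => Nat.le_succ (Nat.sqrt (c n)))
        exact nat_sqrt_tendsto.comp hc_top
  · -- intersection not measurable
    rintro ⟨L, hL⟩
    have hAA' : pos ⁻¹' {j | j % 2 = 0} ∩ pos ⁻¹' {j | j % 2 = K j % 2}
        = pos ⁻¹' {j | j % 2 = 0 ∧ K j % 2 = 0} := by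
      ext x
      simp only [Set.mem_inter_iff, Set.mem_preimage, Set.mem_setOf_eq]
      omega
    have hcnt : ∀ n, ((pos ⁻¹' {j | j % 2 = 0} ∩ pos ⁻¹' {j | j % 2 = K j % 2} ∩ B n).ncard)
        = ((Finset.range (c n)).filter (fun j => j % 2 = 0 ∧ K j % 2 = 0)).card := by
      intro n
      rw [hAA', htrans n, ncard_setOf_inter_Iio]
    simp only [hcnt] at hL
    have hceq : ∀ k, c (nseq k) = M k := fun k => rfl
    -- odd-indexed block ends: small density
    have hub : ∀ k, ((Finset.range (c (nseq (2 * k + 1)))).filter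
        (fun j => j % 2 = 0 ∧ K j % 2 = 0)).card * 10 ≤ c (nseq (2 * k + 1)) := by
      intro k
      show ((Finset.range (M (2 * k + 1))).filter
        (fun j => j % 2 = 0 ∧ K j % 2 = 0)).card * 10 ≤ M (2 * k + 1)
      have hsub : (Finset.range (M (2 * k + 1))).filter (fun j => j % 2 = 0 ∧ K j % 2 = 0)
          ⊆ Finset.range (M (2 * k)) := by
        intro j hj
        simp only [Finset.mem_filter, Finset.mem_range] at hj ⊢
        obtain ⟨hjlt, _, hKj⟩ := hj
        by_contra hcon
        push_neg at hcon
        have h1 : 2 * k < K j := (Kf_iff M hMSM hMex (2 * k) j).1 hcon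
        have h2 : ¬ (2 * k + 1 < K j) := by
          intro hcc
          exact absurd ((Kf_iff M hMSM hMex (2 * k + 1) j).2 hcc) (by omega)
        omega
      have hcard := Finset.card_le_card hsub
      rw [Finset.card_range] at hcard
      have := hM10 (2 * k)
      omega
    -- even-indexed block ends: large density
    have hlb : ∀ k, c (nseq (2 * k + 2)) ≤ 4 * ((Finset.range (c (nseq (2 * k + 2)))).filter
        (fun j => j % 2 = 0 ∧ K j % 2 = 0)).card := by
      intro k
      show M (2 * k + 2) ≤ 4 * ((Finset.range (M (2 * k + 2))).filter
        (fun j => j % 2 = 0 ∧ K j % 2 = 0)).card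
      set a := M (2 * k + 1)
      set b := M (2 * k + 2)
      have hsub : (Finset.Ico a b).filter (fun j => j % 2 = 0)
          ⊆ (Finset.range b).filter (fun j => j % 2 = 0 ∧ K j % 2 = 0) := by
        intro j hj
        simp only [Finset.mem_filter, Finset.mem_Ico, Finset.mem_range] at hj ⊢
        obtain ⟨⟨haj, hjb⟩, hpar⟩ := hj
        have h1 : 2 * k + 1 < K j := (Kf_iff M hMSM hMex (2 * k + 1) j).1 haj
        have h2 : ¬ (2 * k + 2 < K j) := by
          intro hcc
          exact absurd ((Kf_iff M hMSM hMex (2 * k + 2) j).2 hcc) (by omega)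
        have : K j = 2 * k + 2 := by omega
        refine ⟨hjb, hpar, by omega⟩
      have hcard := Finset.card_le_card hsub
      have hIco := (parity_cnt_Ico 0 (by norm_num) a b).1
      have he2 : M (2 * k + 1 + 1) = M (2 * k + 2) := rfl
      have h10 := hM10 (2 * k + 1)
      have hapos := hMpos (2 * k + 1)
      omega
    -- pass to the two subsequences
    have hmono1 : StrictMono (fun k => nseq (2 * k + 1)) := by
      intro x y h
      show nseq (2 * x + 1) < nseq (2 * y + 1)
      exact hnseq_mono (show 2 * x + 1 < 2 * y + 1 by omega)
    have hmono2 : StrictMono (fun k => nseq (2 * k + 2)) := by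
      intro x y h
      show nseq (2 * x + 2) < nseq (2 * y + 2)
      exact hnseq_mono (show 2 * x + 2 < 2 * y + 2 by omega)
    have htop1 : Tendsto (fun k => nseq (2 * k + 1)) atTop atTop :=
      tendsto_atTop_atTop_of_monotone hmono1.monotone
        (fun b => ⟨b, le_trans hmono1.le_apply le_rfl⟩)
    have htop2 : Tendsto (fun k => nseq (2 * k + 2)) atTop atTop :=
      tendsto_atTop_atTop_of_monotone hmono2.monotone
        (fun b => ⟨b, le_trans hmono2.le_apply le_rfl⟩)
    have hL1 := hL.comp htop1
    have hL2 := hL.comp htop2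
    have hLle : L ≤ 1 / 10 := by
      apply le_of_tendsto hL1
      apply Filter.Eventually.of_forall
      intro k
      simp only [Function.comp_apply]
      have hcpos : (0 : ℝ) < c (nseq (2 * k + 1)) := by exact_mod_cast hc_pos _
      rw [div_le_div_iff₀ hcpos (by norm_num : (0:ℝ) < 10)]
      have := hub k
      push_cast
      exact_mod_cast (by omega :
        ((Finset.range (c (nseq (2 * k + 1)))).filter
          (fun j => j % 2 = 0 ∧ K j % 2 = 0)).card * 10 ≤ 1 * c (nseq (2 * k + 1)))
    have hLge : 1 / 4 ≤ L := by
      apply ge_of_tendsto hL2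
      apply Filter.Eventually.of_forall
      intro k
      simp only [Function.comp_apply]
      have hcpos : (0 : ℝ) < c (nseq (2 * k + 2)) := by exact_mod_cast hc_pos _
      rw [div_le_div_iff₀ (by norm_num : (0:ℝ) < 4) hcpos]
      have := hlb k
      exact_mod_cast (by omega :
        1 * c (nseq (2 * k + 2)) ≤ ((Finset.range (c (nseq (2 * k + 2)))).filter
          (fun j => j % 2 = 0 ∧ K j % 2 = 0)).card * 4)
    linarith
end

section
/- Let X be a countable set, λ = {λ_n} probability measures on X, and a_j: X → [0,∞) with k_j := sup_x a_j(x) and Σ_j k_j r^j < ∞ for some r > 0. Assume each a_j ∈ D(L_λ). Then lim_{z→r^-} L_λ(Σ_j a_j(·)z^j) = Σ_j L_λ(a_j) r^j = L_λ(Σ_j a_j(·)r^j). -/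
open Filter Topology Set

/-- If `Σ_j k_j r^j < ∞` and each `a_j ∈ D(L_λ)` with limit `La j`, then
`L_λ(Σ_j a_j(·) z^j) = Σ_j La_j z^j` for `z ∈ [0,r]`, and
`lim_{z→r⁻} L_λ(Σ_j a_j(·) z^j) = Σ_j La_j r^j = L_λ(Σ_j a_j(·) r^j)`. -/
theorem average_of_power_series_abel {X : Type*} [Countable X] [Infinite X]
    (lam : ℕ → X → ℝ)
    (_hpos : ∀ n x, 0 ≤ lam n x) (_hprob : ∀ n, HasSum (lam n) 1)
    (a : ℕ → X → ℝ) (_ha : ∀ j x, 0 ≤ a j x)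
    (k : ℕ → ℝ) (_hk : ∀ j x, a j x ≤ k j)
    (r : ℝ) (_hr : 0 < r) (_hsum : Summable fun j => k j * r ^ j)
    (La : ℕ → ℝ)
    (_hdom : ∀ j, Tendsto (fun n => ∑' x, a j x * lam n x) atTop (nhds (La j))) :
    (∀ z ∈ Set.Icc (0 : ℝ) r,
      Tendsto (fun n => ∑' x, (∑' j, a j x * z ^ j) * lam n x) atTop
        (nhds (∑' j, La j * z ^ j))) ∧
    Tendsto (fun z : ℝ => ∑' j, La j * z ^ j) (nhdsWithin r (Set.Iio r))
      (nhds (∑' j, La j * r ^ j)) := by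
  have hX : Nonempty X := inferInstance
  obtain ⟨x0⟩ := hX
  have hk0 : ∀ j, 0 ≤ k j := fun j => (_ha j x0).trans (_hk j x0)
  have hlamsum : ∀ n, Summable (lam n) := fun n => (_hprob n).summable
  have hsum_a : ∀ n j, Summable fun x => a j x * lam n x := by
    intro n j
    refine Summable.of_nonneg_of_le (fun x => mul_nonneg (_ha j x) (_hpos n x))
      (fun x => mul_le_mul_of_nonneg_right (_hk j x) (_hpos n x))
      ((hlamsum n).mul_left (k j))
  have hS_nonneg : ∀ n j, 0 ≤ ∑' x, a j x * lam n x := fun n j =>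
    tsum_nonneg fun x => mul_nonneg (_ha j x) (_hpos n x)
  have hS_le : ∀ n j, (∑' x, a j x * lam n x) ≤ k j := by
    intro n j
    calc (∑' x, a j x * lam n x) ≤ ∑' x, k j * lam n x :=
          Summable.tsum_le_tsum (fun x => mul_le_mul_of_nonneg_right (_hk j x) (_hpos n x))
            (hsum_a n j) ((hlamsum n).mul_left (k j))
      _ = k j * ∑' x, lam n x := tsum_mul_left
      _ = k j := by rw [(_hprob n).tsum_eq, mul_one]
  have hLa_nonneg : ∀ j, 0 ≤ La j := fun j =>
    ge_of_tendsto (_hdom j) (Eventually.of_forall fun n => hS_nonneg n j)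
  have hLa_le : ∀ j, La j ≤ k j := fun j =>
    le_of_tendsto (_hdom j) (Eventually.of_forall fun n => hS_le n j)
  constructor
  · rintro z ⟨hz0, hzr⟩
    have hzj : ∀ j : ℕ, 0 ≤ z ^ j := fun j => pow_nonneg hz0 j
    have hzrj : ∀ j : ℕ, z ^ j ≤ r ^ j := fun j => pow_le_pow_left₀ hz0 hzr j
    have key : ∀ n, (∑' x, (∑' j, a j x * z ^ j) * lam n x)
        = ∑' j, (∑' x, a j x * lam n x) * z ^ j := by
      intro n
      have hf : Summable (Function.uncurry fun j (x : X) => a j x * z ^ j * lam n x) := by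
        refine (summable_prod_of_nonneg ?_).2 ⟨fun j => ?_, ?_⟩
        · rintro ⟨j, x⟩
          exact mul_nonneg (mul_nonneg (_ha j x) (hzj j)) (_hpos n x)
        · simp only [Function.uncurry]
          have : (fun x => a j x * z ^ j * lam n x)
              = fun x => (a j x * lam n x) * z ^ j := by
            funext x; ring
          rw [this]
          exact (hsum_a n j).mul_right _
        · refine Summable.of_nonneg_of_le
            (fun j => tsum_nonneg fun x =>
              mul_nonneg (mul_nonneg (_ha j x) (hzj j)) (_hpos n x))
            (fun j => ?_) _hsum
          simp only [Function.uncurry]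
          have h1 : (fun x => a j x * z ^ j * lam n x)
              = fun x => (a j x * lam n x) * z ^ j := by
            funext x; ring
          rw [h1, tsum_mul_right]
          calc (∑' x, a j x * lam n x) * z ^ j ≤ k j * z ^ j :=
                mul_le_mul_of_nonneg_right (hS_le n j) (hzj j)
            _ ≤ k j * r ^ j := mul_le_mul_of_nonneg_left (hzrj j) (hk0 j)
      calc (∑' x, (∑' j, a j x * z ^ j) * lam n x)
          = ∑' x, ∑' j, a j x * z ^ j * lam n x := by
            congr 1; funext x; rw [← tsum_mul_right]
        _ = ∑' j, ∑' x, a j x * z ^ j * lam n x := Summable.tsum_comm hf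
        _ = ∑' j, (∑' x, a j x * lam n x) * z ^ j := by
            congr 1; funext j
            have h1 : (fun x => a j x * z ^ j * lam n x)
                = fun x => (a j x * lam n x) * z ^ j := by
              funext x; ring
            rw [h1, tsum_mul_right]
    simp only [key]
    refine tendsto_tsum_of_dominated_convergence _hsum
      (fun j => (_hdom j).mul_const _) (Eventually.of_forall fun n j => ?_)
    rw [Real.norm_eq_abs, abs_of_nonneg (mul_nonneg (hS_nonneg n j) (hzj j))]
    calc (∑' x, a j x * lam n x) * z ^ j ≤ k j * z ^ j :=
          mul_le_mul_of_nonneg_right (hS_le n j) (hzj j)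
      _ ≤ k j * r ^ j := mul_le_mul_of_nonneg_left (hzrj j) (hk0 j)
  · refine tendsto_tsum_of_dominated_convergence _hsum (fun j => ?_) ?_
    · exact ((continuous_pow j).tendsto r).const_mul (La j) |>.mono_left nhdsWithin_le_nhds
    · filter_upwards [Ioo_mem_nhdsLT_of_mem (Set.mem_Ioc.2 ⟨_hr, le_refl r⟩)] with z hz j
      obtain ⟨hz0, hzr⟩ := hz
      rw [Real.norm_eq_abs,
        abs_of_nonneg (mul_nonneg (hLa_nonneg j) (pow_nonneg hz0.le j))]
      calc La j * z ^ j ≤ k j * z ^ j :=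
            mul_le_mul_of_nonneg_right (hLa_le j) (pow_nonneg hz0.le j)
        _ ≤ k j * r ^ j :=
            mul_le_mul_of_nonneg_left (pow_le_pow_left₀ hz0.le hzr.le j) (hk0 j)
end

section
/- Let X be countable, λ = {λ_n} probability measures, and w_j(x,z) = Σ_i a_i^{(j)}(x) z^i, j = 1,2, families of power series with nonnegative coefficients satisfying Σ_i k_i^{(j)} z^i with positive radius of convergence r_j (k_i^{(j)} = sup_x a_i^{(j)}(x)). Suppose for each i there exists X_i ⊆ X with lim_n λ_n(X_i) = 0 and a_i^{(1)}(x) = a_i^{(2)}(x) for all x ∉ X_i. Then for real z with 0 < z < min(r_1, r_2): w_1(·,z) ∈ D(L_λ) if and only if w_2(·,z) ∈ D(L_λ), and in that case L_λ(w_1(·,z)) = L_λ(w_2(·,z)). -/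
open Filter Topology Set

theorem aux_diff_tendsto_zero {X : Type*} [Countable X] [Infinite X]
    (lam : ℕ → X → ℝ)
    (hpos : ∀ n x, 0 ≤ lam n x) (hprob : ∀ n, HasSum (lam n) 1)
    (a1 a2 : ℕ → X → ℝ)
    (ha1 : ∀ i x, 0 ≤ a1 i x) (ha2 : ∀ i x, 0 ≤ a2 i x)
    (k1 k2 : ℕ → ℝ)
    (hk1 : ∀ i x, a1 i x ≤ k1 i) (hk2 : ∀ i x, a2 i x ≤ k2 i)
    (r1 r2 : ℝ) (hr1 : 0 < r1) (hr2 : 0 < r2)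
    (hs1 : Summable fun i => k1 i * r1 ^ i) (hs2 : Summable fun i => k2 i * r2 ^ i)
    (XS : ℕ → Set X)
    (hXS : ∀ i, Tendsto (fun n => ∑' x : XS i, lam n (x : X)) atTop (nhds 0))
    (hagree : ∀ i x, x ∉ XS i → a1 i x = a2 i x)
    (z : ℝ) (hz : 0 < z) (hz1 : z ≤ r1) (hz2 : z ≤ r2) :
    Tendsto (fun n => (∑' x, (∑' i, a1 i x * z ^ i) * lam n x)
      - ∑' x, (∑' i, a2 i x * z ^ i) * lam n x) atTop (nhds 0) := by
  have x0 : X := Classical.arbitrary X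
  have hk1n : ∀ i, 0 ≤ k1 i := fun i => (ha1 i x0).trans (hk1 i x0)
  have hk2n : ∀ i, 0 ≤ k2 i := fun i => (ha2 i x0).trans (hk2 i x0)
  have hzp : ∀ i, (0:ℝ) ≤ z ^ i := fun i => pow_nonneg hz.le i
  have hs1z : Summable fun i => k1 i * z ^ i :=
    hs1.of_nonneg_of_le (fun i => mul_nonneg (hk1n i) (hzp i))
      (fun i => mul_le_mul_of_nonneg_left (pow_le_pow_left₀ hz.le hz1 i) (hk1n i))
  have hs2z : Summable fun i => k2 i * z ^ i :=
    hs2.of_nonneg_of_le (fun i => mul_nonneg (hk2n i) (hzp i))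
      (fun i => mul_le_mul_of_nonneg_left (pow_le_pow_left₀ hz.le hz2 i) (hk2n i))
  set C : ℕ → ℝ := fun i => (k1 i + k2 i) * z ^ i with hC
  have hCsum : Summable C := by
    have := hs1z.add hs2z
    simpa [hC, add_mul] using this
  have hCnn : ∀ i, 0 ≤ C i := fun i => mul_nonneg (add_nonneg (hk1n i) (hk2n i)) (hzp i)
  have hsa1 : ∀ x, Summable fun i => a1 i x * z ^ i := fun x =>
    hs1z.of_nonneg_of_le (fun i => mul_nonneg (ha1 i x) (hzp i))
      (fun i => mul_le_mul_of_nonneg_right (hk1 i x) (hzp i))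
  have hsa2 : ∀ x, Summable fun i => a2 i x * z ^ i := fun x =>
    hs2z.of_nonneg_of_le (fun i => mul_nonneg (ha2 i x) (hzp i))
      (fun i => mul_le_mul_of_nonneg_right (hk2 i x) (hzp i))
  set w1 : X → ℝ := fun x => ∑' i, a1 i x * z ^ i with hw1
  set w2 : X → ℝ := fun x => ∑' i, a2 i x * z ^ i with hw2
  have hlam : ∀ n, Summable (lam n) := fun n => (hprob n).summable
  -- bounds on w
  have hw1b : ∀ x, |w1 x| ≤ ∑' i, k1 i * z ^ i := by
    intro x
    rw [abs_of_nonneg (tsum_nonneg (fun i => mul_nonneg (ha1 i x) (hzp i)))]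
    exact Summable.tsum_le_tsum (fun i => mul_le_mul_of_nonneg_right (hk1 i x) (hzp i)) (hsa1 x) hs1z
  have hw2b : ∀ x, |w2 x| ≤ ∑' i, k2 i * z ^ i := by
    intro x
    rw [abs_of_nonneg (tsum_nonneg (fun i => mul_nonneg (ha2 i x) (hzp i)))]
    exact Summable.tsum_le_tsum (fun i => mul_le_mul_of_nonneg_right (hk2 i x) (hzp i)) (hsa2 x) hs2z
  have hsw1 : ∀ n, Summable fun x => w1 x * lam n x := by
    intro n
    apply ((hlam n).mul_left (∑' i, k1 i * z ^ i)).of_norm_bounded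
    intro x
    rw [Real.norm_eq_abs, abs_mul, abs_of_nonneg (hpos n x)]
    exact mul_le_mul_of_nonneg_right (hw1b x) (hpos n x)
  have hsw2 : ∀ n, Summable fun x => w2 x * lam n x := by
    intro n
    apply ((hlam n).mul_left (∑' i, k2 i * z ^ i)).of_norm_bounded
    intro x
    rw [Real.norm_eq_abs, abs_mul, abs_of_nonneg (hpos n x)]
    exact mul_le_mul_of_nonneg_right (hw2b x) (hpos n x)
  -- indicator bound g
  set g : ℕ → X → ℝ := fun i x => (XS i).indicator (fun _ => C i) x with hg
  have hgnn : ∀ i x, 0 ≤ g i x := by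
    intro i x
    exact Set.indicator_nonneg (fun _ _ => hCnn i) x
  have hgle : ∀ i x, g i x ≤ C i := by
    intro i x
    by_cases h : x ∈ XS i
    · simp [hg, h]
    · simp [hg, h, hCnn i]
  have hb : ∀ i x, |a1 i x * z ^ i - a2 i x * z ^ i| ≤ g i x := by
    intro i x
    by_cases h : x ∈ XS i
    · rw [hg]; simp only [Set.indicator_of_mem h]
      rw [← sub_mul, abs_mul, abs_of_nonneg (hzp i), hC]
      apply mul_le_mul_of_nonneg_right _ (hzp i)
      rw [abs_sub_le_iff]
      constructor
      · linarith [hk1 i x, ha2 i x, hk2n i]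
      · linarith [hk2 i x, ha1 i x, hk1n i]
    · rw [hagree i x h]
      simp [hg, Set.indicator_of_notMem h]
  have hgsum : ∀ x, Summable fun i => g i x :=
    fun x => hCsum.of_nonneg_of_le (fun i => hgnn i x) (fun i => hgle i x)
  -- pointwise bound on |w1 - w2|
  have hwd : ∀ x, |w1 x - w2 x| ≤ ∑' i, g i x := by
    intro x
    rw [hw1, hw2, ← Summable.tsum_sub (hsa1 x) (hsa2 x)]
    calc |∑' i, (a1 i x * z ^ i - a2 i x * z ^ i)|
        ≤ ∑' i, |a1 i x * z ^ i - a2 i x * z ^ i| := by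
          simpa [Real.norm_eq_abs] using
            norm_tsum_le_tsum_norm (f := fun i => a1 i x * z ^ i - a2 i x * z ^ i)
              (by simpa [Real.norm_eq_abs] using ((hsa1 x).sub (hsa2 x)).abs)
      _ ≤ ∑' i, g i x := by
          apply Summable.tsum_le_tsum (fun i => hb i x) _ (hgsum x)
          exact ((hsa1 x).sub (hsa2 x)).abs
  -- the measures of the bad sets
  set mu : ℕ → ℕ → ℝ := fun n i => ∑' x : XS i, lam n (x : X) with hmu
  have hmunn : ∀ n i, 0 ≤ mu n i := fun n i => tsum_nonneg (fun x => hpos n x)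
  have hmule : ∀ n i, mu n i ≤ 1 := by
    intro n i
    rw [hmu]
    calc (∑' x : XS i, lam n (x : X)) ≤ ∑' x, lam n x :=
          Summable.tsum_subtype_le (fun x => lam n x) (XS i) (hpos n) (hlam n)
      _ = 1 := (hprob n).tsum_eq
  set S : ℕ → ℝ := fun n => ∑' i, C i * mu n i with hS
  -- summability of the double family
  have hFs : ∀ n, Summable (Function.uncurry (fun (x : X) (i : ℕ) => g i x * lam n x)) := by
    intro n
    apply Summable.of_nonneg_of_le
      (f := fun p : X × ℕ => lam n p.1 * C p.2) _ _ ((hlam n).mul_of_nonneg hCsum (fun x => hpos n x) hCnn)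
    · exact fun p => mul_nonneg (hgnn p.2 p.1) (hpos n p.1)
    · intro p
      show g p.2 p.1 * lam n p.1 ≤ lam n p.1 * C p.2
      rw [mul_comm (lam n p.1)]
      exact mul_le_mul_of_nonneg_right (hgle p.2 p.1) (hpos n p.1)
  have hFsum2 : ∀ n, Summable fun x => (∑' i, g i x) * lam n x := by
    intro n
    apply Summable.of_nonneg_of_le (f := fun x => (∑' i, C i) * lam n x)
      (fun x => mul_nonneg (tsum_nonneg (fun i => hgnn i x)) (hpos n x))
      _ ((hlam n).mul_left _)
    intro x
    exact mul_le_mul_of_nonneg_right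
      (Summable.tsum_le_tsum (fun i => hgle i x) (hgsum x) hCsum) (hpos n x)
  have habs_sum : ∀ n, Summable fun x => |w1 x - w2 x| * lam n x := by
    intro n
    apply Summable.of_nonneg_of_le
      (fun x => mul_nonneg (abs_nonneg _) (hpos n x)) _ (hFsum2 n)
    exact fun x => mul_le_mul_of_nonneg_right (hwd x) (hpos n x)
  -- main bound
  have hbound : ∀ n, |(∑' x, w1 x * lam n x) - ∑' x, w2 x * lam n x| ≤ S n := by
    intro n
    have hdiff : (∑' x, w1 x * lam n x) - ∑' x, w2 x * lam n x
        = ∑' x, (w1 x - w2 x) * lam n x := by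
      rw [← Summable.tsum_sub (hsw1 n) (hsw2 n)]
      congr 1; ext x; ring
    rw [hdiff]
    have step1 : |∑' x, (w1 x - w2 x) * lam n x| ≤ ∑' x, |w1 x - w2 x| * lam n x := by
      have := norm_tsum_le_tsum_norm (f := fun x => (w1 x - w2 x) * lam n x) ?_
      · simpa [Real.norm_eq_abs, abs_mul, abs_of_nonneg (hpos n _)] using this
      · simpa [Real.norm_eq_abs, abs_mul, abs_of_nonneg (hpos n _)] using habs_sum n
    have step2 : (∑' x, |w1 x - w2 x| * lam n x) ≤ ∑' x, (∑' i, g i x) * lam n x :=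
      Summable.tsum_le_tsum (fun x => mul_le_mul_of_nonneg_right (hwd x) (hpos n x))
        (habs_sum n) (hFsum2 n)
    have step3 : (∑' x, (∑' i, g i x) * lam n x) = ∑' x, ∑' i, g i x * lam n x := by
      congr 1; ext x
      exact (tsum_mul_right).symm
    have step4 : (∑' x, ∑' i, g i x * lam n x) = ∑' i, ∑' x, g i x * lam n x :=
      (Summable.tsum_comm (hFs n)).symm
    have step5 : ∀ i, (∑' x, g i x * lam n x) = C i * mu n i := by
      intro i
      have : ∀ x, g i x * lam n x = (XS i).indicator (fun y => C i * lam n y) x := by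
        intro x
        by_cases h : x ∈ XS i
        · simp [hg, Set.indicator_of_mem h]
        · simp [hg, Set.indicator_of_notMem h]
      calc (∑' x, g i x * lam n x) = ∑' x, (XS i).indicator (fun y => C i * lam n y) x := by
            congr 1; ext x; exact this x
        _ = ∑' x : XS i, C i * lam n (x : X) := (tsum_subtype (XS i) _).symm
        _ = C i * mu n i := by rw [hmu, tsum_mul_left]
    calc |∑' x, (w1 x - w2 x) * lam n x| ≤ ∑' x, |w1 x - w2 x| * lam n x := step1
      _ ≤ ∑' x, (∑' i, g i x) * lam n x := step2
      _ = ∑' i, ∑' x, g i x * lam n x := by rw [step3, step4]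
      _ = S n := by rw [hS]; exact tsum_congr step5
  -- S n → 0
  have hStend : Tendsto S atTop (nhds 0) := by
    have h0 : (0:ℝ) = ∑' (_ : ℕ), (0:ℝ) := by simp
    rw [hS, h0]
    apply tendsto_tsum_of_dominated_convergence (bound := C) hCsum
    · intro i
      simpa using ((hXS i).const_mul (C i))
    · filter_upwards with n i
      rw [Real.norm_eq_abs, abs_of_nonneg (mul_nonneg (hCnn i) (hmunn n i))]
      calc C i * mu n i ≤ C i * 1 := mul_le_mul_of_nonneg_left (hmule n i) (hCnn i)
        _ = C i := mul_one _
  rw [tendsto_zero_iff_abs_tendsto_zero]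
  exact squeeze_zero (fun n => abs_nonneg _) hbound hStend

/-- If the coefficients of two dominated power series families agree
outside zero-measure sets `X_i`, then for `0 < z < min r1 r2` the two power series are
simultaneously in the domain of `L_λ`, with the same limit on the average. -/
theorem average_power_series_agree_off_null_sets {X : Type*} [Countable X] [Infinite X]
    (lam : ℕ → X → ℝ)
    (_hpos : ∀ n x, 0 ≤ lam n x) (_hprob : ∀ n, HasSum (lam n) 1)
    (a1 a2 : ℕ → X → ℝ)
    (_ha1 : ∀ i x, 0 ≤ a1 i x) (_ha2 : ∀ i x, 0 ≤ a2 i x)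
    (k1 k2 : ℕ → ℝ)
    (_hk1 : ∀ i x, a1 i x ≤ k1 i) (_hk2 : ∀ i x, a2 i x ≤ k2 i)
    (r1 r2 : ℝ) (_hr1 : 0 < r1) (_hr2 : 0 < r2)
    (_hs1 : Summable fun i => k1 i * r1 ^ i) (_hs2 : Summable fun i => k2 i * r2 ^ i)
    (XS : ℕ → Set X)
    (_hXS : ∀ i, Tendsto (fun n => ∑' x : XS i, lam n (x : X)) atTop (nhds 0))
    (_hagree : ∀ i x, x ∉ XS i → a1 i x = a2 i x)
    (z : ℝ) (_hz : 0 < z) (_hzr : z < min r1 r2) :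
    ((∃ l : ℝ, Tendsto (fun n => ∑' x, (∑' i, a1 i x * z ^ i) * lam n x) atTop (nhds l)) ↔
      (∃ l : ℝ, Tendsto (fun n => ∑' x, (∑' i, a2 i x * z ^ i) * lam n x) atTop (nhds l))) ∧
    (∀ l : ℝ, Tendsto (fun n => ∑' x, (∑' i, a1 i x * z ^ i) * lam n x) atTop (nhds l) →
      Tendsto (fun n => ∑' x, (∑' i, a2 i x * z ^ i) * lam n x) atTop (nhds l)) := by
  have hz1 : z ≤ r1 := le_of_lt (lt_of_lt_of_le _hzr (min_le_left _ _))
  have hz2 : z ≤ r2 := le_of_lt (lt_of_lt_of_le _hzr (min_le_right _ _))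
  have key12 := aux_diff_tendsto_zero lam _hpos _hprob a1 a2 _ha1 _ha2 k1 k2 _hk1 _hk2
    r1 r2 _hr1 _hr2 _hs1 _hs2 XS _hXS _hagree z _hz hz1 hz2
  have key21 := aux_diff_tendsto_zero lam _hpos _hprob a2 a1 _ha2 _ha1 k2 k1 _hk2 _hk1
    r2 r1 _hr2 _hr1 _hs2 _hs1 XS _hXS (fun i x hx => (_hagree i x hx).symm) z _hz hz2 hz1
  have trans12 : ∀ l : ℝ,
      Tendsto (fun n => ∑' x, (∑' i, a1 i x * z ^ i) * lam n x) atTop (nhds l) →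
      Tendsto (fun n => ∑' x, (∑' i, a2 i x * z ^ i) * lam n x) atTop (nhds l) := by
    intro l h
    have := h.sub key12
    simpa using this
  have trans21 : ∀ l : ℝ,
      Tendsto (fun n => ∑' x, (∑' i, a2 i x * z ^ i) * lam n x) atTop (nhds l) →
      Tendsto (fun n => ∑' x, (∑' i, a1 i x * z ^ i) * lam n x) atTop (nhds l) := by
    intro l h
    have := h.sub key21
    simpa using this
  exact ⟨⟨fun ⟨l, h⟩ => ⟨l, trans12 l h⟩, fun ⟨l, h⟩ => ⟨l, trans21 l h⟩⟩, trans12⟩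
end

section
/- Let (X,P) be an irreducible random walk on a countable set X, with first-return generating function F(x,x|z) = Σ_{n≥1} f^{(n)}(x,x) z^n and Green function G(x,x|z) = 1/(1 − F(x,x|z)). Let λ = {λ_n} be probability measures on X. If F(·,·|z) ∈ D(L_λ) for all z ∈ (ε,1) and lim_{z→1^-} L_λ(F(z)) = 1, then lim_{z→1^-} liminf_n Σ_x G(x,x|z)λ_n(x) = +∞. -/
open Filter Topology Set

lemma tangent_ineq {a t : ℝ} (ha : a < 1) (ht : t < 1) :
    (1-a)⁻¹ + (t-a)*((1-a)⁻¹)^2 ≤ (1-t)⁻¹ := by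
  have h1 : (0:ℝ) < 1 - a := by linarith
  have h2 : (0:ℝ) < 1 - t := by linarith
  rw [inv_eq_one_div (1-t), le_div_iff₀ h2]
  have expand : 1 - ((1-a)⁻¹ + (t-a)*((1-a)⁻¹)^2) * (1-t) = (a-t)^2 * ((1-a)⁻¹)^2 := by
    field_simp
    ring
  nlinarith [mul_nonneg (sq_nonneg (a-t)) (sq_nonneg ((1-a)⁻¹))]

/-- For a random walk with first-return generating functions
`F(x,x|z) = Σ_{n≥1} f^{(n)}(x,x) z^n` and Green functions `G(x,x|z) = 1/(1 - F(x,x|z))`,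
if `F(·,·|z) ∈ D(L_λ)` for `z ∈ (ε,1)` and `lim_{z→1⁻} L_λ(F(z)) = 1`, then
`lim_{z→1⁻} infL_λ(G(z)) = +∞`. -/
theorem green_average_tendsto_infty {X : Type*} [Countable X] [Infinite X]
    (lam : ℕ → X → ℝ)
    (_hpos : ∀ n x, 0 ≤ lam n x) (_hprob : ∀ n, HasSum (lam n) 1)
    (f : ℕ → X → ℝ)
    (_hf : ∀ n x, 0 ≤ f n x) (_hf0 : ∀ x, f 0 x = 0)
    (_hfsumm : ∀ x, Summable fun n => f n x)
    (_hsub : ∀ x, ∑' n, f n x ≤ 1)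
    (ε : ℝ) (_hε : 0 < ε) (_hε1 : ε < 1)
    (LF : ℝ → ℝ)
    (_hdom : ∀ z ∈ Set.Ioo ε 1,
      Tendsto (fun n => ∑' x, (∑' m, f m x * z ^ m) * lam n x) atTop (nhds (LF z)))
    (_hlim : Tendsto LF (nhdsWithin 1 (Set.Iio 1)) (nhds 1)) :
    Tendsto
      (fun z : ℝ =>
        Filter.liminf (fun n => ∑' x, (1 - ∑' m, f m x * z ^ m)⁻¹ * lam n x) atTop)
      (nhdsWithin 1 (Set.Iio 1)) atTop := by
  rw [tendsto_atTop]
  intro C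
  have hc0 : (0:ℝ) < max C 1 := lt_of_lt_of_le one_pos (le_max_right _ _)
  have h1 : ∀ᶠ z in nhdsWithin (1:ℝ) (Iio 1), 1 - (max C 1)⁻¹ < LF z :=
    _hlim.eventually (eventually_gt_nhds (by
      have : (0:ℝ) < (max C 1)⁻¹ := inv_pos.2 hc0
      linarith))
  have h2 : ∀ᶠ z in nhdsWithin (1:ℝ) (Iio 1), z ∈ Ioo ε 1 :=
    Ioo_mem_nhdsLT_of_mem (by constructor <;> simp [_hε1.le, _hε1])
  filter_upwards [h1, h2] with z hz1 hz2
  obtain ⟨hzε, hz1'⟩ := hz2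
  have hz0 : (0:ℝ) < z := lt_trans _hε hzε
  -- basic facts about F x := ∑' m, f m x * z ^ m
  have hFsumm : ∀ x, Summable (fun m => f m x * z ^ m) := by
    intro x
    refine Summable.of_nonneg_of_le (fun m => mul_nonneg (_hf m x) (pow_nonneg hz0.le m))
      (fun m => ?_) (_hfsumm x)
    calc f m x * z ^ m ≤ f m x * 1 :=
          mul_le_mul_of_nonneg_left (pow_le_one₀ hz0.le hz1'.le) (_hf m x)
      _ = f m x := mul_one _
  have hF0 : ∀ x, 0 ≤ ∑' m, f m x * z ^ m := fun x =>
    tsum_nonneg fun m => mul_nonneg (_hf m x) (pow_nonneg hz0.le m)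
  have hFz : ∀ x, (∑' m, f m x * z ^ m) ≤ z := by
    intro x
    have hle : ∀ m, f m x * z ^ m ≤ f m x * z := by
      intro m
      match m with
      | 0 => simp [_hf0 x]
      | (m+1) =>
        exact mul_le_mul_of_nonneg_left
          (pow_le_of_le_one hz0.le hz1'.le (Nat.succ_ne_zero m)) (_hf (m+1) x)
    calc (∑' m, f m x * z ^ m) ≤ ∑' m, f m x * z :=
          Summable.tsum_le_tsum hle (hFsumm x) ((_hfsumm x).mul_right z)
      _ = (∑' m, f m x) * z := tsum_mul_right
      _ ≤ 1 * z := mul_le_mul_of_nonneg_right (_hsub x) hz0.le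
      _ = z := one_mul z
  have hFlt1 : ∀ x, (∑' m, f m x * z ^ m) < 1 := fun x => lt_of_le_of_lt (hFz x) hz1'
  have hzinv : (0:ℝ) < 1 - z := by linarith
  -- summability of F·λ and G·λ
  have hlamS : ∀ n, Summable (lam n) := fun n => (_hprob n).summable
  have hFl : ∀ n, Summable (fun x => (∑' m, f m x * z ^ m) * lam n x) := by
    intro n
    refine Summable.of_nonneg_of_le (fun x => mul_nonneg (hF0 x) (_hpos n x))
      (fun x => mul_le_mul_of_nonneg_right (hFz x) (_hpos n x)) ?_
    simpa using (hlamS n).mul_left z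
  have hGle : ∀ x, (1 - ∑' m, f m x * z ^ m)⁻¹ ≤ (1 - z)⁻¹ := by
    intro x
    exact inv_anti₀ hzinv (by linarith [hFz x])
  have hGpos : ∀ x, 0 ≤ (1 - ∑' m, f m x * z ^ m)⁻¹ := fun x =>
    inv_nonneg.2 (by linarith [hFlt1 x])
  have hGl : ∀ n, Summable (fun x => (1 - ∑' m, f m x * z ^ m)⁻¹ * lam n x) := by
    intro n
    refine Summable.of_nonneg_of_le (fun x => mul_nonneg (hGpos x) (_hpos n x))
      (fun x => mul_le_mul_of_nonneg_right (hGle x) (_hpos n x)) ?_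
    simpa using (hlamS n).mul_left (1-z)⁻¹
  have gbound : ∀ n, (∑' x, (1 - ∑' m, f m x * z ^ m)⁻¹ * lam n x) ≤ (1 - z)⁻¹ := by
    intro n
    calc (∑' x, (1 - ∑' m, f m x * z ^ m)⁻¹ * lam n x)
        ≤ ∑' x, (1 - z)⁻¹ * lam n x :=
          Summable.tsum_le_tsum (fun x => mul_le_mul_of_nonneg_right (hGle x) (_hpos n x)) (hGl n)
            (by simpa using (hlamS n).mul_left (1-z)⁻¹)
      _ = (1 - z)⁻¹ * ∑' x, lam n x := tsum_mul_left
      _ = (1 - z)⁻¹ := by rw [(_hprob n).tsum_eq, mul_one]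
  -- S n → LF z, with bounds
  have hS := _hdom z ⟨hzε, hz1'⟩
  have hSz : ∀ n, (∑' x, (∑' m, f m x * z ^ m) * lam n x) ≤ z := by
    intro n
    calc (∑' x, (∑' m, f m x * z ^ m) * lam n x) ≤ ∑' x, z * lam n x :=
          Summable.tsum_le_tsum (fun x => mul_le_mul_of_nonneg_right (hFz x) (_hpos n x)) (hFl n)
            (by simpa using (hlamS n).mul_left z)
      _ = z * ∑' x, lam n x := tsum_mul_left
      _ = z := by rw [(_hprob n).tsum_eq, mul_one]
  have haz : LF z ≤ z := le_of_tendsto hS (Eventually.of_forall hSz)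
  have ha1 : LF z < 1 := lt_of_le_of_lt haz hz1'
  have h1a : (0:ℝ) < 1 - LF z := by linarith
  have haC : C < (1 - LF z)⁻¹ := by
    have hlt : 1 - LF z < (max C 1)⁻¹ := by linarith
    have := inv_strictAnti₀ h1a hlt
    rw [inv_inv] at this
    exact lt_of_le_of_lt (le_max_left C 1) this
  -- lower bound for the Green average via the tangent inequality (Jensen)
  set c1 : ℝ := (1 - LF z)⁻¹ with hc1
  have hlow : ∀ n, c1 + c1^2 * ((∑' x, (∑' m, f m x * z ^ m) * lam n x) - LF z)
      ≤ ∑' x, (1 - ∑' m, f m x * z ^ m)⁻¹ * lam n x := by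
    intro n
    have heq : (fun x => (c1 + ((∑' m, f m x * z ^ m) - LF z) * c1^2) * lam n x)
        = fun x => c1 * lam n x + c1^2 * ((∑' m, f m x * z ^ m) * lam n x)
            - (c1^2 * LF z) * lam n x := funext fun x => by ring
    have hs1 : Summable fun x => c1 * lam n x := (hlamS n).mul_left c1
    have hs2 : Summable fun x => c1^2 * ((∑' m, f m x * z ^ m) * lam n x) :=
      (hFl n).mul_left _
    have hs3 : Summable fun x => (c1^2 * LF z) * lam n x := (hlamS n).mul_left _
    have hsum : Summable (fun x => (c1 + ((∑' m, f m x * z ^ m) - LF z) * c1^2) * lam n x) := by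
      rw [heq]; exact (hs1.add hs2).sub hs3
    have hle : (∑' x, (c1 + ((∑' m, f m x * z ^ m) - LF z) * c1^2) * lam n x)
        ≤ ∑' x, (1 - ∑' m, f m x * z ^ m)⁻¹ * lam n x :=
      Summable.tsum_le_tsum (fun x => mul_le_mul_of_nonneg_right
        (tangent_ineq ha1 (hFlt1 x)) (_hpos n x)) hsum (hGl n)
    refine le_trans (le_of_eq ?_) hle
    rw [heq, Summable.tsum_sub (hs1.add hs2) hs3, Summable.tsum_add hs1 hs2,
      tsum_mul_left, tsum_mul_left, tsum_mul_left, (_hprob n).tsum_eq]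
    ring
  have htend : Tendsto (fun n => c1 + c1^2 * ((∑' x, (∑' m, f m x * z ^ m) * lam n x) - LF z))
      atTop (nhds c1) := by
    have : Tendsto (fun n => (∑' x, (∑' m, f m x * z ^ m) * lam n x) - LF z) atTop (nhds 0) := by
      simpa using hS.sub (tendsto_const_nhds (x := LF z))
    simpa using (tendsto_const_nhds (x := c1)).add (this.const_mul (c1^2))
  have hev : ∀ᶠ n in atTop, C ≤ ∑' x, (1 - ∑' m, f m x * z ^ m)⁻¹ * lam n x := by
    filter_upwards [htend.eventually (eventually_gt_nhds haC)] with n hn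
    exact le_trans hn.le (hlow n)
  have hcob : IsCoboundedUnder (· ≥ ·) atTop
      (fun n => ∑' x, (1 - ∑' m, f m x * z ^ m)⁻¹ * lam n x) :=
    (isBoundedUnder_of ⟨(1-z)⁻¹, fun n => gbound n⟩).isCoboundedUnder_ge
  exact le_liminf_of_le hcob hev
end

section
/- Let X be countable, λ = {λ_n} probability measures on X, and F: X → ℝ with N ≤ F(x) ≤ M. Suppose λ is regular (λ_n({x}) → 0 for each x). Then limsup_n Σ_x F(x)λ_n(x) = M if and only if there exists A ⊆ X with limsup_n λ_n(A) = 1 and lim_{x→∞, x∈A} F(x) = M (i.e., A is infinite and for every ε > 0 all but finitely many x ∈ A satisfy F(x) > M − ε). -/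
open Filter Topology Set

private lemma my_tsum_set_mono {X : Type*} {f : X → ℝ} (hf : ∀ x, 0 ≤ f x) (hs : Summable f)
    {A B : Set X} (h : A ⊆ B) :
    (∑' x : A, f (x : X)) ≤ ∑' x : B, f (x : X) :=
  Summable.tsum_le_tsum_of_inj (Set.inclusion h) (Set.inclusion_injective h)
    (fun c _ => hf c) (fun _ => le_rfl) ((hs.subtype A)) ((hs.subtype B))

set_option maxHeartbeats 1000000 in
/-- For regular `λ` and `N ≤ F ≤ M`:
`limsup_n Σ_x F(x)λ_n(x) = M` iff there exists `A ⊆ X` with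
`limsup_n λ_n(A) = 1` and `F → M` at infinity along `A`. -/
theorem limsup_average_eq_sup_iff_exists_set {X : Type*} [Countable X] [Infinite X]
    (lam : ℕ → X → ℝ)
    (_hpos : ∀ n x, 0 ≤ lam n x) (_hprob : ∀ n, HasSum (lam n) 1)
    (_hreg : ∀ x, Tendsto (fun n => lam n x) atTop (nhds 0))
    (F : X → ℝ) (N M : ℝ) (_hF : ∀ x, N ≤ F x ∧ F x ≤ M) :
    Filter.limsup (fun n => ∑' x, F x * lam n x) atTop = M ↔
      ∃ A : Set X,
        Filter.limsup (fun n => ∑' x : A, lam n (x : X)) atTop = 1 ∧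
        A.Infinite ∧ ∀ ε > (0 : ℝ), {x ∈ A | F x ≤ M - ε}.Finite := by
  classical
  have hsum : ∀ n, Summable (lam n) := fun n => (_hprob n).summable
  have hlam1 : ∀ n, (∑' x, lam n x) = 1 := fun n => (_hprob n).tsum_eq
  have hPsub : ∀ n (A : Set X), Summable (fun x : A => lam n (x : X)) :=
    fun n A => (hsum n).subtype A
  have hPnonneg : ∀ n (A : Set X), 0 ≤ ∑' x : A, lam n (x : X) :=
    fun n A => tsum_nonneg (fun x => _hpos n x)
  have hPle : ∀ n (A : Set X), (∑' x : A, lam n (x : X)) ≤ 1 := by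
    intro n A
    rw [← hlam1 n]
    exact Summable.tsum_subtype_le (lam n) A (_hpos n) (hsum n)
  have hPmono : ∀ n {A B : Set X}, A ⊆ B →
      (∑' x : A, lam n (x : X)) ≤ ∑' x : B, lam n (x : X) :=
    fun n A B h => my_tsum_set_mono (_hpos n) (hsum n) h
  have hFsum : ∀ n, Summable (fun x => F x * lam n x) := by
    intro n
    apply Summable.of_abs
    apply Summable.of_nonneg_of_le (fun x => abs_nonneg _) (fun x => ?_)
      ((hsum n).mul_left (max |N| |M|))
    rw [abs_mul, abs_of_nonneg (_hpos n x)]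
    refine mul_le_mul_of_nonneg_right ?_ (_hpos n x)
    rcases _hF x with ⟨h1, h2⟩
    rw [abs_le]
    constructor
    · have : -|N| ≤ N := neg_abs_le N
      exact le_trans (neg_le_neg (le_max_left _ _)) (le_trans this h1)
    · exact le_trans h2 (le_trans (le_abs_self M) (le_max_right _ _))
  have hSle : ∀ n, (∑' x, F x * lam n x) ≤ M := by
    intro n
    calc (∑' x, F x * lam n x) ≤ ∑' x, M * lam n x :=
          Summable.tsum_le_tsum (fun x => mul_le_mul_of_nonneg_right (_hF x).2 (_hpos n x))
            (hFsum n) ((hsum n).mul_left M)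
      _ = M := by rw [tsum_mul_left, hlam1 n, mul_one]
  have hSge : ∀ n, N ≤ ∑' x, F x * lam n x := by
    intro n
    calc N = ∑' x, N * lam n x := by rw [tsum_mul_left, hlam1 n, mul_one]
      _ ≤ ∑' x, F x * lam n x :=
          Summable.tsum_le_tsum (fun x => mul_le_mul_of_nonneg_right (_hF x).1 (_hpos n x))
            ((hsum n).mul_left N) (hFsum n)
  have hbddS : IsBoundedUnder (· ≤ ·) atTop (fun n => ∑' x, F x * lam n x) :=
    isBoundedUnder_of ⟨M, hSle⟩
  have hbddSge : IsBoundedUnder (· ≥ ·) atTop (fun n => ∑' x, F x * lam n x) :=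
    isBoundedUnder_of ⟨N, hSge⟩
  have hcobSle := hbddSge.isCoboundedUnder_le
  have hcobSge := hbddS.isCoboundedUnder_ge
  -- sums over finite sets tend to 0
  have hfin0 : ∀ T : Set X, T.Finite →
      Tendsto (fun n => ∑' x : T, lam n (x : X)) atTop (nhds 0) := by
    intro T hT
    have heq : ∀ n, (∑' x : T, lam n (x : X)) = ∑ x ∈ hT.toFinset, lam n x := by
      intro n
      conv_lhs => rw [← hT.coe_toFinset]
      exact Finset.tsum_subtype' _ _
    rw [show (fun n => ∑' x : T, lam n (x : X)) = fun n => ∑ x ∈ hT.toFinset, lam n x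
        from funext heq]
    have := tendsto_finset_sum (f := fun x n => lam n x) (x := atTop) (a := fun _ => (0:ℝ))
      hT.toFinset (fun x _ => _hreg x)
    simpa using this
  constructor
  · -- forward direction
    intro hM
    have key : ∀ ε δ : ℝ, 0 < ε → 0 < δ →
        ∃ᶠ n in atTop, 1 - δ < ∑' x : {x | M - ε < F x}, lam n (x : X) := by
      intro ε δ hε hδ
      have h1 : ∃ᶠ n in atTop, M - ε * δ < ∑' x, F x * lam n x :=
        frequently_lt_of_lt_limsup hcobSle (by rw [hM]; nlinarith)
      refine h1.mono ?_
      intro n hn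
      set A : Set X := {x | M - ε < F x} with hAdef
      have hsplit : (∑' x : A, lam n (x : X)) + (∑' x : ↥Aᶜ, lam n (x : X)) = 1 := by
        rw [Summable.tsum_subtype_add_tsum_subtype_compl (hsum n) A, hlam1 n]
      have hgsum : Summable (fun x => (M - F x) * lam n x) := by
        have h : (fun x => (M - F x) * lam n x)
            = fun x => M * lam n x - F x * lam n x := funext fun x => by ring
        rw [h]; exact ((hsum n).mul_left M).sub (hFsum n)
      have hMS : M - (∑' x, F x * lam n x) = ∑' x, (M - F x) * lam n x := by
        have h : (fun x => (M - F x) * lam n x)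
            = fun x => M * lam n x - F x * lam n x := funext fun x => by ring
        rw [h, Summable.tsum_sub ((hsum n).mul_left M) (hFsum n), tsum_mul_left, hlam1 n, mul_one]
      have hge : (∑' x : ↥Aᶜ, (M - F (x : X)) * lam n (x : X)) ≤ ∑' x, (M - F x) * lam n x :=
        Summable.tsum_subtype_le _ _ (fun x => mul_nonneg (sub_nonneg.2 (_hF x).2) (_hpos n x)) hgsum
      have hge2 : (∑' x : ↥Aᶜ, ε * lam n (x : X))
          ≤ ∑' x : ↥Aᶜ, (M - F (x : X)) * lam n (x : X) := by
        apply Summable.tsum_le_tsum ?_ (Summable.mul_left ε (hPsub n Aᶜ)) (hgsum.subtype _)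
        intro x
        have hx : (x : X) ∈ Aᶜ := x.2
        have hxF : F (x : X) ≤ M - ε := by
          by_contra hcon; push_neg at hcon; exact hx hcon
        exact mul_le_mul_of_nonneg_right (by linarith) (_hpos n (x : X))
      have heps : (∑' x : ↥Aᶜ, ε * lam n (x : X)) = ε * ∑' x : ↥Aᶜ, lam n (x : X) :=
        tsum_mul_left
      have hcompl : ε * (∑' x : ↥Aᶜ, lam n (x : X)) < ε * δ := by
        rw [← heps]
        calc (∑' x : ↥Aᶜ, ε * lam n (x : X))
            ≤ ∑' x, (M - F x) * lam n x := le_trans hge2 hge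
          _ = M - (∑' x, F x * lam n x) := hMS.symm
          _ < ε * δ := by linarith
      have hlt : (∑' x : ↥Aᶜ, lam n (x : X)) < δ := by
        have := (mul_lt_mul_iff_right₀ hε).mp hcompl
        exact this
      linarith [hsplit]
    have key' : ∀ k m : ℕ, ∃ n, m ≤ n ∧
        1 - 1 / ((k : ℝ) + 1) < ∑' x : {x | M - 1 / ((k : ℝ) + 1) < F x}, lam n (x : X) := by
      intro k m
      have hkpos : 0 < 1 / ((k : ℝ) + 1) := by positivity
      obtain ⟨n, hn, h⟩ := (frequently_atTop.1 (key _ _ hkpos hkpos)) m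
      exact ⟨n, hn, h⟩
    let f : ℕ → ℕ := fun k =>
      Nat.rec (key' 0 0).choose (fun k ih => (key' (k + 1) (ih + 1)).choose) k
    have hfs : ∀ k : ℕ, 1 - 1 / ((k : ℝ) + 1)
        < ∑' x : {x | M - 1 / ((k : ℝ) + 1) < F x}, lam (f k) (x : X) := by
      intro k
      cases k with
      | zero => exact (key' 0 0).choose_spec.2
      | succ k => exact (key' (k + 1) (f k + 1)).choose_spec.2
    have hfmono : ∀ k, f k < f (k + 1) := fun k =>
      lt_of_lt_of_le (Nat.lt_succ_self _) (key' (k + 1) (f k + 1)).choose_spec.1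
    have hfk : ∀ k, k ≤ f k := by
      intro k
      induction k with
      | zero => exact Nat.zero_le _
      | succ k ih => exact Nat.succ_le_of_lt (lt_of_le_of_lt ih (hfmono k))
    have hB : ∀ k : ℕ, ∃ B : Finset X,
        (↑B : Set X) ⊆ {x | M - 1 / ((k : ℝ) + 1) < F x} ∧
        1 - 2 / ((k : ℝ) + 1) < ∑ x ∈ B, lam (f k) x := by
      intro k
      set A : Set X := {x | M - 1 / ((k : ℝ) + 1) < F x} with hAdef
      have hsA : Summable (fun x : A => lam (f k) (x : X)) := hPsub _ _
      have hkpos : (0 : ℝ) < (k : ℝ) + 1 := by positivity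
      have hlt : 1 - 2 / ((k : ℝ) + 1) < ∑' x : A, lam (f k) (x : X) := by
        refine lt_trans ?_ (hfs k)
        have : 1 / ((k : ℝ) + 1) < 2 / ((k : ℝ) + 1) := by
          rw [div_lt_div_iff₀ hkpos hkpos]; nlinarith
        linarith
      obtain ⟨t, ht⟩ := (hsA.hasSum.eventually (eventually_gt_nhds hlt)).exists
      refine ⟨t.image Subtype.val, ?_, ?_⟩
      · intro x hx
        rcases Finset.mem_image.1 (Finset.mem_coe.1 hx) with ⟨a, -, rfl⟩
        exact a.2
      · rw [Finset.sum_image (fun x _ y _ h => Subtype.ext h)]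
        exact ht
    choose B hBsub hBsum using hB
    have hfreq : ∀ γ : ℝ, 0 < γ →
        ∃ᶠ n in atTop, 1 - γ < ∑' x : (⋃ k, (↑(B k) : Set X)), lam n (x : X) := by
      intro γ hγ
      rw [frequently_atTop]
      intro m
      obtain ⟨k0, hk0⟩ := exists_nat_one_div_lt (half_pos hγ)
      refine ⟨f (max m k0), le_trans (le_max_left m k0) (hfk _), ?_⟩
      set k := max m k0 with hkdef
      have h1 : (∑ x ∈ B k, lam (f k) x) ≤ ∑' x : (⋃ j, (↑(B j) : Set X)), lam (f k) (x : X) := by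
        rw [← Finset.tsum_subtype' (B k) (lam (f k))]
        exact hPmono (f k) (Set.subset_iUnion (fun j => (↑(B j) : Set X)) k)
      have hk0k : (1 : ℝ) / ((k : ℝ) + 1) ≤ 1 / ((k0 : ℝ) + 1) := by
        apply one_div_le_one_div_of_le (by positivity)
        have : ((k0 : ℝ)) ≤ (k : ℝ) := by exact_mod_cast le_max_right m k0
        linarith
      have h2 : 2 / ((k : ℝ) + 1) < γ := by
        have : (2 : ℝ) / ((k : ℝ) + 1) = 2 * (1 / ((k : ℝ) + 1)) := by ring
        rw [this]
        calc 2 * (1 / ((k : ℝ) + 1)) ≤ 2 * (1 / ((k0 : ℝ) + 1)) := by linarith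
          _ < 2 * (γ / 2) := by linarith
          _ = γ := by ring
      calc 1 - γ < 1 - 2 / ((k : ℝ) + 1) := by linarith
        _ < ∑ x ∈ B k, lam (f k) x := hBsum k
        _ ≤ _ := h1
    refine ⟨⋃ k, (↑(B k) : Set X), ?_, ?_, ?_⟩
    · -- limsup = 1
      apply le_antisymm
      · exact limsup_le_of_le
          ((isBoundedUnder_of ⟨0, fun n => hPnonneg n _⟩ :
            IsBoundedUnder (· ≥ ·) atTop _).isCoboundedUnder_le)
          (Eventually.of_forall fun n => hPle n _)
      · apply le_of_forall_pos_le_add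
        intro γ hγ
        have hle := le_limsup_of_frequently_le ((hfreq γ hγ).mono fun n h => le_of_lt h)
          (isBoundedUnder_of ⟨1, fun n => hPle n _⟩)
        linarith
    · -- infinite
      by_contra hcon
      rw [Set.not_infinite] at hcon
      have h0 := hfin0 _ hcon
      have h3 := h0.eventually (eventually_lt_nhds (show (0 : ℝ) < 1/2 by norm_num))
      obtain ⟨n, hn1, hn2⟩ := ((hfreq (1/2) (by norm_num)).and_eventually h3).exists
      linarith
    · -- finiteness of bad sets
      intro ε hε
      obtain ⟨k, hk⟩ := exists_nat_one_div_lt hε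
      apply Set.Finite.subset ((Set.finite_Iio k).biUnion (fun j _ => (B j).finite_toSet))
      intro x hx
      obtain ⟨hxA, hxF⟩ := hx
      obtain ⟨j, hj⟩ := Set.mem_iUnion.1 hxA
      by_cases hjk : j < k
      · exact Set.mem_biUnion hjk hj
      · exfalso
        push_neg at hjk
        have hxin : M - 1 / ((j : ℝ) + 1) < F x := hBsub j hj
        have hjj : (1 : ℝ) / ((j : ℝ) + 1) ≤ 1 / ((k : ℝ) + 1) := by
          apply one_div_le_one_div_of_le (by positivity)
          have : ((k : ℝ)) ≤ (j : ℝ) := by exact_mod_cast hjk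
          linarith
        linarith
  · -- backward direction
    rintro ⟨A, hA1, -, hAfin⟩
    apply le_antisymm
    · exact limsup_le_of_le hcobSle (Eventually.of_forall hSle)
    · apply le_of_forall_pos_le_add
      intro η hη
      set D : ℝ := max (M - N) 0 + 1 with hDdef
      have hD0 : (0 : ℝ) < D := by
        have := le_max_right (M - N) (0 : ℝ); simp only [hDdef]; linarith
      have hDMN : M - N ≤ D := by
        have := le_max_left (M - N) (0 : ℝ); simp only [hDdef]; linarith
      set ε : ℝ := η / 2 with hεdef
      set δ : ℝ := η / (4 * D) with hδdef
      have hεpos : 0 < ε := half_pos hη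
      have hδpos : 0 < δ := by positivity
      have hSfin := hAfin ε hεpos
      set Sε : Set X := {x ∈ A | F x ≤ M - ε} with hSεdef
      have hev := (hfin0 Sε hSfin).eventually (eventually_lt_nhds hδpos)
      have hfr : ∃ᶠ n in atTop, 1 - δ < ∑' x : A, lam n (x : X) := by
        apply frequently_lt_of_lt_limsup
        · exact (isBoundedUnder_of ⟨0, fun n => hPnonneg n A⟩ :
            IsBoundedUnder (· ≥ ·) atTop _).isCoboundedUnder_le
        · rw [hA1]; linarith
      have hfr2 : ∃ᶠ n in atTop, M - η ≤ ∑' x, F x * lam n x := by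
        refine (hfr.and_eventually hev).mono ?_
        rintro n ⟨h1, h2⟩
        have hsub : Sε ⊆ A := fun x hx => hx.1
        have hsplit : (∑' x : A, lam n (x : X))
            = (∑' x : ↥(A \ Sε), lam n (x : X)) + ∑' x : Sε, lam n (x : X) := by
          conv_lhs => rw [← Set.diff_union_of_subset hsub]
          exact Summable.tsum_union_disjoint Set.disjoint_sdiff_left (hPsub n _) (hPsub n _)
        set q : ℝ := ∑' x : ↥(A \ Sε), lam n (x : X) with hqdef
        have hq1 : q ≤ 1 := hPle n _
        have hq0 : 0 ≤ q := hPnonneg n _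
        have hq2 : 1 - 2 * δ < q := by
          have h3 := hPnonneg n Sε
          have h4 : (∑' x : Sε, lam n (x : X)) < δ := h2
          linarith [hsplit, h1]
        have hg : Summable (fun x => (F x - N) * lam n x) := by
          have h : (fun x => (F x - N) * lam n x)
              = fun x => F x * lam n x - N * lam n x := funext fun x => by ring
          rw [h]; exact (hFsum n).sub ((hsum n).mul_left N)
        have hSN : (∑' x, (F x - N) * lam n x) = (∑' x, F x * lam n x) - N := by
          have h : (fun x => (F x - N) * lam n x)
              = fun x => F x * lam n x - N * lam n x := funext fun x => by ring
          rw [h, Summable.tsum_sub (hFsum n) ((hsum n).mul_left N), tsum_mul_left, hlam1 n, mul_one]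
        have hstep1 : (∑' x : ↥(A \ Sε), (F (x : X) - N) * lam n (x : X))
            ≤ ∑' x, (F x - N) * lam n x :=
          Summable.tsum_subtype_le _ _ (fun x => mul_nonneg (sub_nonneg.2 (_hF x).1) (_hpos n x)) hg
        have hstep2 : (M - ε - N) * q
            ≤ ∑' x : ↥(A \ Sε), (F (x : X) - N) * lam n (x : X) := by
          have hmul : (∑' x : ↥(A \ Sε), (M - ε - N) * lam n (x : X)) = (M - ε - N) * q :=
            tsum_mul_left
          rw [← hmul]
          apply Summable.tsum_le_tsum ?_ (Summable.mul_left (M - ε - N) (hPsub n (A \ Sε))) (hg.subtype (A \ Sε))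
          intro x
          have hx : (x : X) ∈ A \ Sε := x.2
          have hxF : M - ε < F (x : X) := by
            by_contra hcon
            push_neg at hcon
            exact hx.2 ⟨hx.1, hcon⟩
          exact mul_le_mul_of_nonneg_right (by linarith) (_hpos n (x : X))
        have hδD : 2 * δ * D = η / 2 := by
          rw [hδdef]; field_simp; ring
        rcases le_or_gt (M - ε - N) 0 with hc | hc
        · nlinarith [hstep1, hstep2, hSN, hq1]
        · have hcD : M - ε - N ≤ D := by linarith
          nlinarith [hstep1, hstep2, hSN, hq2, hδpos]
      have hle := le_limsup_of_frequently_le hfr2 hbddS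
      linarith
end

section
/- Let (X,P) be a random walk on a countable set with first-return probabilities F(x,x) = Σ_{n≥1} f^{(n)}(x,x) ∈ [0,1], and λ = {λ_n} a sequence of probability measures on X. Then liminf_n Σ_x F(x,x)λ_n(x) < 1 (the walk is λ-TOA) if and only if there exists a subset A ⊆ X with limsup_n λ_n(A) > 0 and sup_{x∈A} F(x,x) < 1. -/
set_option maxHeartbeats 1000000

open Filter Topology Set

/-- A random walk with return probabilities `F(x,x) ∈ [0,1]` is `λ`-TOA
(`liminf_n Σ_x F(x,x)λ_n(x) < 1`) iff there is a set `A` with `limsup_n λ_n(A) > 0`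
and `sup_{x∈A} F(x,x) < 1`. -/
theorem toa_iff_exists_set {X : Type*} [Countable X] [Infinite X]
    (lam : ℕ → X → ℝ)
    (_hpos : ∀ n x, 0 ≤ lam n x) (_hprob : ∀ n, HasSum (lam n) 1)
    (F : X → ℝ) (_hF : ∀ x, F x ∈ Set.Icc (0 : ℝ) 1) :
    Filter.liminf (fun n => ∑' x, F x * lam n x) atTop < 1 ↔
      ∃ A : Set X,
        0 < Filter.limsup (fun n => ∑' x : A, lam n (x : X)) atTop ∧
        (⨆ x : A, F (x : X)) < 1 := by
  have hF0 : ∀ x, 0 ≤ F x := fun x => (_hF x).1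
  have hF1 : ∀ x, F x ≤ 1 := fun x => (_hF x).2
  have hsum : ∀ n, Summable (lam n) := fun n => (_hprob n).summable
  have hsumA : ∀ (n) (A : Set X), Summable (fun x : A => lam n (x : X)) :=
    fun n A => (hsum n).subtype A
  have hgsum : ∀ n, Summable (fun x => F x * lam n x) := by
    intro n
    refine Summable.of_nonneg_of_le (fun x => mul_nonneg (hF0 x) (_hpos n x)) ?_ (hsum n)
    intro x
    calc F x * lam n x ≤ 1 * lam n x := mul_le_mul_of_nonneg_right (hF1 x) (_hpos n x)
    _ = lam n x := one_mul _
  have hgsumA : ∀ (n) (A : Set X), Summable (fun x : A => F (x : X) * lam n (x : X)) :=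
    fun n A => (hgsum n).subtype A
  -- split : λ_n(A) + λ_n(Aᶜ) = 1
  have hsplit : ∀ (n) (A : Set X),
      (∑' x : A, lam n (x : X)) + (∑' x : (Aᶜ : Set X), lam n (x : X)) = 1 := by
    intro n A
    exact ((hsumA n A).hasSum.add_compl (hsumA n Aᶜ).hasSum).unique (_hprob n)
  have hAnonneg : ∀ (n) (A : Set X), 0 ≤ ∑' x : A, lam n (x : X) :=
    fun n A => tsum_nonneg (fun x => _hpos n x)
  have hAle1 : ∀ (n) (A : Set X), (∑' x : A, lam n (x : X)) ≤ 1 := by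
    intro n A
    have := hsplit n A
    nlinarith [hAnonneg n Aᶜ]
  set g : ℕ → ℝ := fun n => ∑' x, F x * lam n x with hg
  have hg0 : ∀ n, 0 ≤ g n := fun n => tsum_nonneg (fun x => mul_nonneg (hF0 x) (_hpos n x))
  have hg1 : ∀ n, g n ≤ 1 := by
    intro n
    calc g n ≤ ∑' x, lam n x := by
          refine Summable.tsum_le_tsum ?_ (hgsum n) (hsum n)
          intro x
          calc F x * lam n x ≤ 1 * lam n x := mul_le_mul_of_nonneg_right (hF1 x) (_hpos n x)
          _ = lam n x := one_mul _
    _ = 1 := (_hprob n).tsum_eq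
  have hgBddBelow : IsBoundedUnder (· ≥ ·) atTop g := isBoundedUnder_of ⟨0, hg0⟩
  have hgBddAbove : IsBoundedUnder (· ≤ ·) atTop g := isBoundedUnder_of ⟨1, hg1⟩
  -- split of g over A, Aᶜ
  have hgsplit : ∀ (n) (A : Set X),
      (∑' x : A, F (x : X) * lam n (x : X)) + (∑' x : (Aᶜ : Set X), F (x : X) * lam n (x : X))
        = g n := by
    intro n A
    exact ((hgsumA n A).hasSum.add_compl (hgsumA n Aᶜ).hasSum).unique (hgsum n).hasSum
  constructor
  · -- forward
    intro hlim
    have hlim0 : 0 ≤ liminf g atTop := le_liminf_of_le hgBddAbove.isCoboundedUnder_ge (Eventually.of_forall hg0)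
    set t : ℝ := (liminf g atTop + 1) / 2 with ht
    have htlt : liminf g atTop < t := by rw [ht]; linarith
    have ht1 : t < 1 := by rw [ht]; linarith
    have ht0 : 0 ≤ t := by rw [ht]; linarith
    set u : ℝ := (t + 1) / 2 with hu
    have htu : t < u := by rw [hu]; linarith
    have hu1 : u < 1 := by rw [hu]; linarith
    have hu0 : 0 < u := by rw [hu]; linarith
    refine ⟨{x | F x ≤ u}, ?_, ?_⟩
    · -- frequently g n < t, and then λ_n(A) ≥ 1 - t/u
      have hfreq : ∃ᶠ n in atTop, g n < t :=
        frequently_lt_of_liminf_lt hgBddAbove.isCoboundedUnder_ge htlt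
      set A : Set X := {x | F x ≤ u}
      have hkey : ∀ n, g n < t → 1 - t / u ≤ ∑' x : A, lam n (x : X) := by
        intro n hn
        have hb : u * (∑' x : (Aᶜ : Set X), lam n (x : X))
            ≤ ∑' x : (Aᶜ : Set X), F (x : X) * lam n (x : X) := by
          rw [← tsum_mul_left]
          refine Summable.tsum_le_tsum ?_ ((hsumA n Aᶜ).mul_left u) (hgsumA n Aᶜ)
          rintro ⟨x, hx⟩
          have : u ≤ F x := le_of_lt (by simpa [A] using hx)
          exact mul_le_mul_of_nonneg_right this (_hpos n x)
        have hle : u * (∑' x : (Aᶜ : Set X), lam n (x : X)) ≤ g n := by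
          refine hb.trans ?_
          have := hgsplit n A
          nlinarith [tsum_nonneg (L := SummationFilter.unconditional _) (fun x : A => mul_nonneg (hF0 x) (_hpos n (x : X)))]
        have hAc : (∑' x : (Aᶜ : Set X), lam n (x : X)) ≤ t / u := by
          rw [le_div_iff₀ hu0]
          nlinarith
        have := hsplit n A
        linarith
      have : 1 - t / u ≤ limsup (fun n => ∑' x : A, lam n (x : X)) atTop := by
        refine le_limsup_of_frequently_le (hfreq.mono (fun n hn => hkey n hn))
          (isBoundedUnder_of ⟨1, fun n => hAle1 n A⟩)
      have hpos : (0:ℝ) < 1 - t / u := by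
        have : t / u < 1 := (div_lt_one hu0).2 htu
        linarith
      linarith
    · refine lt_of_le_of_lt (Real.iSup_le ?_ (le_of_lt hu0)) hu1
      rintro ⟨x, hx⟩
      simpa using hx
  · -- reverse
    rintro ⟨A, hA, hsup⟩
    have hAne : A.Nonempty := by
      by_contra h
      rw [Set.not_nonempty_iff_eq_empty] at h
      subst h
      have : ∀ n, (∑' x : (∅ : Set X), lam n (x : X)) = 0 := by
        intro n; simp [tsum_empty]
      simp only [this] at hA
      simp at hA
    set s : ℝ := ⨆ x : A, F (x : X) with hs
    have hs0 : 0 ≤ s := by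
      obtain ⟨a, ha⟩ := hAne
      have hbdd : BddAbove (Set.range fun x : A => F (x : X)) :=
        ⟨1, by rintro y ⟨x, rfl⟩; exact hF1 _⟩
      exact le_trans (hF0 a) (le_ciSup hbdd ⟨a, ha⟩)
    have hbdd : BddAbove (Set.range fun x : A => F (x : X)) :=
      ⟨1, by rintro y ⟨x, rfl⟩; exact hF1 _⟩
    -- g n ≤ 1 - (1-s) λ_n(A)
    have hkey : ∀ n, g n ≤ 1 - (1 - s) * (∑' x : A, lam n (x : X)) := by
      intro n
      have h1 : (∑' x : A, F (x : X) * lam n (x : X)) ≤ s * (∑' x : A, lam n (x : X)) := by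
        rw [← tsum_mul_left]
        refine Summable.tsum_le_tsum ?_ (hgsumA n A) ((hsumA n A).mul_left s)
        intro x
        exact mul_le_mul_of_nonneg_right (le_ciSup hbdd x) (_hpos n (x : X))
      have h2 : (∑' x : (Aᶜ : Set X), F (x : X) * lam n (x : X))
          ≤ ∑' x : (Aᶜ : Set X), lam n (x : X) := by
        refine Summable.tsum_le_tsum ?_ (hgsumA n Aᶜ) (hsumA n Aᶜ)
        intro x
        calc F (x : X) * lam n (x : X) ≤ 1 * lam n (x : X) :=
              mul_le_mul_of_nonneg_right (hF1 _) (_hpos n _)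
        _ = lam n (x : X) := one_mul _
      have h3 := hgsplit n A
      have h4 := hsplit n A
      nlinarith
    -- frequently λ_n(A) > c/2 where c = limsup
    set c : ℝ := limsup (fun n => ∑' x : A, lam n (x : X)) atTop with hc
    have hfreq : ∃ᶠ n in atTop, c / 2 < ∑' x : A, lam n (x : X) := by
      have hbb : IsBoundedUnder (· ≥ ·) atTop (fun n => ∑' x : A, lam n (x : X)) :=
        isBoundedUnder_of ⟨0, fun n => hAnonneg n A⟩
      refine frequently_lt_of_lt_limsup hbb.isCoboundedUnder_le ?_
      linarith
    have hlim : liminf g atTop ≤ 1 - (1 - s) * (c / 2) := by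
      refine liminf_le_of_frequently_le (hfreq.mono (fun n hn => ?_)) hgBddBelow
      exact (hkey n).trans (by nlinarith)
    refine lt_of_le_of_lt hlim ?_
    nlinarith
end
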